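/- arXiv:math/0312166 — 13 statements merged into one kernel-verified Lean document; each statement's English description precedes it below -/
import Mathlib

section
/- Let H₁, H₂, H₋, H₊ be complex Hilbert spaces and let a Grushin problem for P : H₁ → H₂ be well posed with inverse blocks E, E₊, E₋, E₋₊. Then: (i) E ∘ P ∘ E = E always holds; (ii) P ∘ E ∘ P = P if and only if E₋ ∘ P = 0; (iii) (P ∘ E)* = P ∘ E if and only if (R₋ ∘ E₋)* = R₋ ∘ E₋; (iv) (E ∘ P)* = E ∘ P if and only if (E₊ ∘ R₊)* = E₊ ∘ R₊. In particular, when the three conditions E₋ ∘ P = 0, (R₋ ∘ E₋)* = R₋ ∘ E₋ and (E₊ ∘ R₊)* = E₊ ∘ R₊ hold, E satisfies the four Moore–Penrose equations P E P = P, E P E = E, (P E)* = P E, (E P)* = E P. -/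
/-- For a well-posed Grushin problem on Hilbert spaces with inverse blocks
`E, E₊, E₋, E₋₊`: (i) `E P E = E`; (ii) `P E P = P ↔ E₋ P = 0`;
(iii) `(P E)* = P E ↔ (R₋ E₋)* = R₋ E₋`; (iv) `(E P)* = E P ↔ (E₊ R₊)* = E₊ R₊`;
and when the three right-hand conditions hold, `E` satisfies the four Moore–Penrose
equations for `P`. -/
theorem stmt_2
    {H₁ H₂ Hm Hp : Type*}
    [NormedAddCommGroup H₁] [InnerProductSpace ℂ H₁] [CompleteSpace H₁]
    [NormedAddCommGroup H₂] [InnerProductSpace ℂ H₂] [CompleteSpace H₂]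
    [NormedAddCommGroup Hm] [InnerProductSpace ℂ Hm] [CompleteSpace Hm]
    [NormedAddCommGroup Hp] [InnerProductSpace ℂ Hp] [CompleteSpace Hp]
    (P : H₁ →L[ℂ] H₂) (Rm : Hm →L[ℂ] H₂) (Rp : H₁ →L[ℂ] Hp)
    (E : H₂ →L[ℂ] H₁) (Ep : Hp →L[ℂ] H₁) (Em : H₂ →L[ℂ] Hm) (Emp : Hp →L[ℂ] Hm)
    (hright : ∀ (v : H₂) (vp : Hp),
      P (E v + Ep vp) + Rm (Em v + Emp vp) = v ∧ Rp (E v + Ep vp) = vp)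
    (hleft : ∀ (u : H₁) (um : Hm),
      E (P u + Rm um) + Ep (Rp u) = u ∧ Em (P u + Rm um) + Emp (Rp u) = um) :
    E.comp (P.comp E) = E ∧
    (P.comp (E.comp P) = P ↔ Em.comp P = 0) ∧
    (ContinuousLinearMap.adjoint (P.comp E) = P.comp E ↔
      ContinuousLinearMap.adjoint (Rm.comp Em) = Rm.comp Em) ∧
    (ContinuousLinearMap.adjoint (E.comp P) = E.comp P ↔
      ContinuousLinearMap.adjoint (Ep.comp Rp) = Ep.comp Rp) ∧
    ((Em.comp P = 0 ∧
        ContinuousLinearMap.adjoint (Rm.comp Em) = Rm.comp Em ∧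
        ContinuousLinearMap.adjoint (Ep.comp Rp) = Ep.comp Rp) →
      (P.comp (E.comp P) = P ∧ E.comp (P.comp E) = E ∧
        ContinuousLinearMap.adjoint (P.comp E) = P.comp E ∧
        ContinuousLinearMap.adjoint (E.comp P) = E.comp P)) := by
  have hA1 : ∀ v : H₂, P (E v) + Rm (Em v) = v := fun v => by simpa using (hright v 0).1
  have hB1 : ∀ u : H₁, E (P u) + Ep (Rp u) = u := fun u => by simpa using (hleft u 0).1
  have hB3 : ∀ um : Hm, E (Rm um) = 0 := fun um => by simpa using (hleft 0 um).1
  have hB4 : ∀ um : Hm, Em (Rm um) = um := fun um => by simpa using (hleft 0 um).2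
  have hPE : P.comp E = ContinuousLinearMap.id ℂ H₂ - Rm.comp Em := by
    ext v
    simp only [ContinuousLinearMap.comp_apply, ContinuousLinearMap.sub_apply,
      ContinuousLinearMap.id_apply]
    exact eq_sub_of_add_eq (hA1 v)
  have hEP : E.comp P = ContinuousLinearMap.id ℂ H₁ - Ep.comp Rp := by
    ext u
    simp only [ContinuousLinearMap.comp_apply, ContinuousLinearMap.sub_apply,
      ContinuousLinearMap.id_apply]
    exact eq_sub_of_add_eq (hB1 u)
  have hi : E.comp (P.comp E) = E := by
    ext v
    have h : P (E v) = v - Rm (Em v) := eq_sub_of_add_eq (hA1 v)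
    simp only [ContinuousLinearMap.comp_apply, h, map_sub, hB3, sub_zero]
  have hii : P.comp (E.comp P) = P ↔ Em.comp P = 0 := by
    constructor
    · intro h
      ext u
      have h1 : P (E (P u)) = P u := by
        have := congrArg (fun T : H₁ →L[ℂ] H₂ => T u) h
        simpa using this
      have h2 : Rm (Em (P u)) = 0 := by
        have := hA1 (P u)
        rw [h1] at this
        exact add_eq_left.mp this
      have := congrArg Em h2
      rw [hB4] at this
      simpa using this
    · intro h
      ext u
      have h0 : Em (P u) = 0 := by
        have := congrArg (fun T : H₁ →L[ℂ] Hm => T u) h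
        simpa using this
      have := hA1 (P u)
      rw [h0] at this
      simpa using this
  have hiii : ContinuousLinearMap.adjoint (P.comp E) = P.comp E ↔
      ContinuousLinearMap.adjoint (Rm.comp Em) = Rm.comp Em := by
    rw [hPE, map_sub, ContinuousLinearMap.adjoint_id, sub_right_injective.eq_iff]
  have hiv : ContinuousLinearMap.adjoint (E.comp P) = E.comp P ↔
      ContinuousLinearMap.adjoint (Ep.comp Rp) = Ep.comp Rp := by
    rw [hEP, map_sub, ContinuousLinearMap.adjoint_id, sub_right_injective.eq_iff]
  exact ⟨hi, hii, hiii, hiv, fun ⟨h1, h2, h3⟩ => ⟨hii.mpr h1, hi, hiii.mpr h2, hiv.mpr h3⟩⟩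
end

section
/- Let n ≥ 1, let J be the n × n complex matrix with J_{i,j} = 1 if j = i + 1 and 0 otherwise (nilpotent upper Jordan block), and for λ ∈ ℂ let 𝒥(λ) be the (n+1) × (n+1) matrix whose top-left n × n block is J − λ·I, whose last column has entries 0 in rows 1,…,n−1, 1 in row n, and 0 in row n+1, and whose last row has entries 1 in column 1 and 0 in columns 2,…,n and n+1. Then 𝒥(λ) is invertible for every λ ∈ ℂ, and its inverse satisfies: (𝒥(λ)⁻¹)_{n+1,n+1} = λⁿ; (𝒥(λ)⁻¹)_{j,n+1} = λ^{j−1} for 1 ≤ j ≤ n; and (𝒥(λ)⁻¹)_{n+1,j} = λ^{n−j} for 1 ≤ j ≤ n. -/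
/-- The `(n+1) × (n+1)` Grushin matrix for the nilpotent Jordan block `J − λ`,
with last column `e₋` (the `n`-th standard basis vector of `ℂⁿ`, zero in the corner)
and last row `e₊ᵀ` (the first standard basis vector). Indices are 0-based. -/
def grushinJordan (n : ℕ) (lam : ℂ) : Matrix (Fin (n + 1)) (Fin (n + 1)) ℂ :=
  fun i j =>
    if (i : ℕ) < n then
      if (j : ℕ) < n then
        (if (j : ℕ) = (i : ℕ) + 1 then 1 else 0) - (if (j : ℕ) = (i : ℕ) then lam else 0)
      else (if (i : ℕ) = n - 1 then 1 else 0)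
    else
      if (j : ℕ) < n then (if (j : ℕ) = 0 then 1 else 0) else 0

/-- Explicit inverse of the Grushin matrix. -/
def grushinInv (n : ℕ) (lam : ℂ) : Matrix (Fin (n + 1)) (Fin (n + 1)) ℂ :=
  fun j i =>
    if (i : ℕ) < n then
      (if (i : ℕ) < (j : ℕ) then lam ^ ((j : ℕ) - 1 - (i : ℕ)) else 0)
    else lam ^ (j : ℕ)

lemma grushin_mul_inv (n : ℕ) (hn : 1 ≤ n) (lam : ℂ) :
    grushinJordan n lam * grushinInv n lam = 1 := by
  ext k i
  rw [Matrix.mul_apply, Matrix.one_apply]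
  by_cases hk : (k : ℕ) < n
  · obtain ⟨a, hav⟩ : ∃ a : Fin (n + 1), (a : ℕ) = (k : ℕ) + 1 :=
      ⟨⟨(k : ℕ) + 1, by omega⟩, rfl⟩
    have hG : ∀ j : Fin (n + 1), grushinJordan n lam k j
        = (if j = a then 1 else 0) - (if j = k then lam else 0) := by
      intro j
      by_cases hj : (j : ℕ) < n
      · simp only [grushinJordan, hk, hj, if_true, Fin.ext_iff, hav]
      · have hjn : (j : ℕ) = n := by omega
        have e2 : ¬ (j = k) := by rw [Fin.ext_iff]; omega
        have e1 : (j = a) ↔ ((k : ℕ) = n - 1) := by rw [Fin.ext_iff, hav, hjn]; omega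
        simp only [grushinJordan, hk, hj, if_true, if_false, e1, e2, sub_zero]
    simp_rw [hG, sub_mul, ite_mul, one_mul, zero_mul, Finset.sum_sub_distrib,
      Finset.sum_ite_eq' Finset.univ, Finset.mem_univ, if_true]
    by_cases hi : (i : ℕ) < n
    · simp only [grushinInv, hi, if_true, hav]
      rcases lt_trichotomy ((i : ℕ)) ((k : ℕ)) with h1 | h1 | h1
      · rw [if_pos (by omega : (i : ℕ) < (k : ℕ) + 1), if_pos h1,
          if_neg (show ¬ k = i by intro h; subst h; omega),
          show (k : ℕ) + 1 - 1 - (i : ℕ) = ((k : ℕ) - 1 - (i : ℕ)) + 1 from by omega,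
          pow_succ]
        ring
      · rw [if_pos (by omega : (i : ℕ) < (k : ℕ) + 1), if_neg (by omega),
          if_pos (show k = i from Fin.ext (by omega)),
          show (k : ℕ) + 1 - 1 - (i : ℕ) = 0 from by omega, pow_zero]
        ring
      · rw [if_neg (by omega), if_neg (by omega),
          if_neg (show ¬ k = i by intro h; subst h; omega)]
        ring
    · simp only [grushinInv, hi, if_false, hav]
      rw [if_neg (show ¬ k = i by intro h; subst h; omega), pow_succ]
      ring
  · have hkn : (k : ℕ) = n := by omega
    have hG : ∀ j : Fin (n + 1), grushinJordan n lam k j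
        = (if j = (0 : Fin (n + 1)) then 1 else 0) := by
      intro j
      by_cases hj : (j : ℕ) < n
      · simp only [grushinJordan, hk, hj, if_true, if_false, Fin.ext_iff, Fin.val_zero]
      · have hjn : (j : ℕ) = n := by omega
        have hne : ¬ (j = (0 : Fin (n + 1))) := by
          intro h; rw [Fin.ext_iff] at h; simp [hjn] at h; omega
        simp only [grushinJordan, hk, hj, if_false, hne]
    simp_rw [hG, ite_mul, one_mul, zero_mul,
      Finset.sum_ite_eq' Finset.univ, Finset.mem_univ, if_true]
    by_cases hi : (i : ℕ) < n
    · have hne : ¬ (k = i) := by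
        intro h; subst h; omega
      simp [grushinInv, hi, hne]
    · have heq : k = i := Fin.ext (by omega)
      simp [grushinInv, hi, heq]

/-- For `n ≥ 1` and every `λ ∈ ℂ` the Grushin matrix `𝒥(λ)` is invertible, and its
inverse satisfies `(𝒥(λ)⁻¹)_{n+1,n+1} = λⁿ`, `(𝒥(λ)⁻¹)_{j,n+1} = λ^{j-1}` for
`1 ≤ j ≤ n`, and `(𝒥(λ)⁻¹)_{n+1,j} = λ^{n-j}` for `1 ≤ j ≤ n` (stated 0-based). -/
theorem stmt_4 (n : ℕ) (hn : 1 ≤ n) (lam : ℂ) :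
    IsUnit (grushinJordan n lam) ∧
    (grushinJordan n lam)⁻¹ (Fin.last n) (Fin.last n) = lam ^ n ∧
    (∀ j : Fin (n + 1), (j : ℕ) < n →
      (grushinJordan n lam)⁻¹ j (Fin.last n) = lam ^ (j : ℕ)) ∧
    (∀ j : Fin (n + 1), (j : ℕ) < n →
      (grushinJordan n lam)⁻¹ (Fin.last n) j = lam ^ (n - 1 - (j : ℕ))) := by
  have hGM := grushin_mul_inv n hn lam
  have hinv : (grushinJordan n lam)⁻¹ = grushinInv n lam :=
    Matrix.inv_eq_right_inv hGM
  refine ⟨?_, ?_, ?_, ?_⟩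
  · have := invertibleOfRightInverse _ _ hGM
    exact isUnit_of_invertible _
  · rw [hinv]
    simp [grushinInv]
  · intro j hj
    rw [hinv]
    simp [grushinInv]
  · intro j hj
    rw [hinv]
    simp [grushinInv, hj]
end

section
/- Let a Grushin problem for P : H₁ → H₂ be well posed with inverse blocks E, E₊, E₋, E₋₊. Let Q : H₁ → H₂ be a bounded operator and ε ∈ ℂ with |ε| · ‖Q‖ · ‖E‖ < 1. Then the Grushin problem for P + εQ with the same operators R₋, R₊ is well posed, and its effective Hamiltonian is given by the operator-norm convergent series E₋₊^ε = E₋₊ + Σ_{k=1}^∞ (−1)^k ε^k E₋ ∘ Q ∘ (E ∘ Q)^{k−1} ∘ E₊. -/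
/-- Perturbation of a well-posed Grushin problem: if `|ε|‖Q‖‖E‖ < 1` then the Grushin
problem for `P + εQ` (with the same `R₋, R₊`) is well posed and its effective
Hamiltonian is `E₋₊ + Σ_{k≥1} (−1)^k ε^k E₋ Q (E Q)^{k−1} E₊`, the series converging
in operator norm. -/
theorem stmt_5
    {H₁ H₂ Hm Hp : Type*}
    [NormedAddCommGroup H₁] [NormedSpace ℂ H₁] [CompleteSpace H₁]
    [NormedAddCommGroup H₂] [NormedSpace ℂ H₂] [CompleteSpace H₂]
    [NormedAddCommGroup Hm] [NormedSpace ℂ Hm] [CompleteSpace Hm]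
    [NormedAddCommGroup Hp] [NormedSpace ℂ Hp] [CompleteSpace Hp]
    (P Q : H₁ →L[ℂ] H₂) (Rm : Hm →L[ℂ] H₂) (Rp : H₁ →L[ℂ] Hp)
    (E : H₂ →L[ℂ] H₁) (Ep : Hp →L[ℂ] H₁) (Em : H₂ →L[ℂ] Hm) (Emp : Hp →L[ℂ] Hm)
    (hright : ∀ (v : H₂) (vp : Hp),
      P (E v + Ep vp) + Rm (Em v + Emp vp) = v ∧ Rp (E v + Ep vp) = vp)
    (hleft : ∀ (u : H₁) (um : Hm),
      E (P u + Rm um) + Ep (Rp u) = u ∧ Em (P u + Rm um) + Emp (Rp u) = um)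
    (ε : ℂ) (hε : ‖ε‖ * ‖Q‖ * ‖E‖ < 1) :
    ∃ (E' : H₂ →L[ℂ] H₁) (Ep' : Hp →L[ℂ] H₁) (Em' : H₂ →L[ℂ] Hm) (Emp' : Hp →L[ℂ] Hm),
      (∀ (v : H₂) (vp : Hp),
        (P + ε • Q) (E' v + Ep' vp) + Rm (Em' v + Emp' vp) = v ∧
        Rp (E' v + Ep' vp) = vp) ∧
      (∀ (u : H₁) (um : Hm),
        E' ((P + ε • Q) u + Rm um) + Ep' (Rp u) = u ∧
        Em' ((P + ε • Q) u + Rm um) + Emp' (Rp u) = um) ∧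
      Summable (fun k : ℕ =>
        ((-1 : ℂ) ^ (k + 1) * ε ^ (k + 1)) •
          (Em.comp (Q.comp (((E.comp Q) ^ k).comp Ep)))) ∧
      Emp' = Emp + ∑' k : ℕ,
        ((-1 : ℂ) ^ (k + 1) * ε ^ (k + 1)) •
          (Em.comp (Q.comp (((E.comp Q) ^ k).comp Ep))) := by
  set t : H₁ →L[ℂ] H₁ := -(ε • (E.comp Q)) with ht_def
  have ht : ‖t‖ < 1 := by
    calc ‖t‖ = ‖ε • (E.comp Q)‖ := norm_neg _
    _ ≤ ‖ε‖ * (‖E‖ * ‖Q‖) := by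
        refine (norm_smul_le ε (E.comp Q)).trans ?_
        exact mul_le_mul_of_nonneg_left (E.opNorm_comp_le Q) (norm_nonneg ε)
    _ = ‖ε‖ * ‖Q‖ * ‖E‖ := by ring
    _ < 1 := hε
  have hsum : Summable (fun n : ℕ => t ^ n) := summable_geometric_of_norm_lt_one ht
  set B : H₁ →L[ℂ] H₁ := ∑' n : ℕ, t ^ n with hB_def
  have hAB : (1 - t) * B = 1 := mul_neg_geom_series t ht
  have hBA : B * (1 - t) = 1 := geom_series_mul_neg t ht
  -- pointwise versions
  have F1 : ∀ x : H₁, B x + ε • E (Q (B x)) = x := by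
    intro x
    have := DFunLike.congr_fun hAB x
    simpa [ht_def, ContinuousLinearMap.mul_apply, sub_eq_add_neg] using this
  have F2 : ∀ x : H₁, B x + ε • B (E (Q x)) = x := by
    intro x
    have := DFunLike.congr_fun hBA x
    simpa [ht_def, ContinuousLinearMap.mul_apply, sub_eq_add_neg] using this
  -- the linear map x ↦ (-ε) • (Em ∘ Q) ∘ x ∘ Ep
  set L : (H₁ →L[ℂ] H₁) →L[ℂ] (Hp →L[ℂ] Hm) :=
    (-ε) • ((ContinuousLinearMap.compL ℂ Hp H₁ Hm (Em.comp Q)).comp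
      ((ContinuousLinearMap.compL ℂ Hp H₁ H₁).flip Ep)) with hL_def
  have hLx : ∀ x : H₁ →L[ℂ] H₁, L x = (-ε) • ((Em.comp Q).comp (x.comp Ep)) := by
    intro x
    simp [hL_def]
  have hterm : ∀ k : ℕ,
      ((-1 : ℂ) ^ (k + 1) * ε ^ (k + 1)) •
        (Em.comp (Q.comp (((E.comp Q) ^ k).comp Ep))) = L (t ^ k) := by
    intro k
    have h1 : t ^ k = ((-ε) ^ k) • (E.comp Q) ^ k := by
      rw [ht_def, ← neg_smul, smul_pow]
    rw [hLx, h1]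
    rw [ContinuousLinearMap.smul_comp, ContinuousLinearMap.comp_smul, smul_smul,
      ContinuousLinearMap.comp_assoc]
    congr 1
    ring
  refine ⟨B.comp E, B.comp Ep,
    Em - ε • (Em.comp (Q.comp (B.comp E))),
    Emp - ε • (Em.comp (Q.comp (B.comp Ep))), ?_, ?_, ?_, ?_⟩
  · intro v vp
    constructor
    · have G1 : P (B (E v)) + ε • P (E (Q (B (E v)))) = P (E v) := by
        have := congrArg P (F1 (E v)); simpa [map_add, map_smul] using this
      have G2 : P (B (Ep vp)) + ε • P (E (Q (B (Ep vp)))) = P (Ep vp) := by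
        have := congrArg P (F1 (Ep vp)); simpa [map_add, map_smul] using this
      have G3 : P (E v) + P (Ep vp) + (Rm (Em v) + Rm (Emp vp)) = v := by
        have := (hright v vp).1; simpa [map_add] using this
      have G4 : P (E (Q (B (E v)))) + Rm (Em (Q (B (E v)))) = Q (B (E v)) := by
        have := (hright (Q (B (E v))) 0).1; simpa using this
      have G5 : P (E (Q (B (Ep vp)))) + Rm (Em (Q (B (Ep vp)))) = Q (B (Ep vp)) := by
        have := (hright (Q (B (Ep vp))) 0).1; simpa using this
      simp only [ContinuousLinearMap.add_apply, ContinuousLinearMap.smul_apply,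
        ContinuousLinearMap.sub_apply, ContinuousLinearMap.comp_apply, map_add, map_smul, map_sub]
      linear_combination (norm := module) G1 + G2 + G3 - ε • G4 - ε • G5
    · have H1 : Rp (B (E v)) + ε • Rp (E (Q (B (E v)))) = Rp (E v) := by
        have := congrArg Rp (F1 (E v)); simpa [map_add, map_smul] using this
      have H2 : Rp (B (Ep vp)) + ε • Rp (E (Q (B (Ep vp)))) = Rp (Ep vp) := by
        have := congrArg Rp (F1 (Ep vp)); simpa [map_add, map_smul] using this
      have H3 : Rp (E v) + Rp (Ep vp) = vp := by
        have := (hright v vp).2; simpa [map_add] using this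
      have H4 : Rp (E (Q (B (E v)))) = 0 := by
        have := (hright (Q (B (E v))) 0).2; simpa using this
      have H5 : Rp (E (Q (B (Ep vp)))) = 0 := by
        have := (hright (Q (B (Ep vp))) 0).2; simpa using this
      simp only [ContinuousLinearMap.comp_apply, map_add]
      linear_combination (norm := module) H1 + H2 + H3 - ε • H4 - ε • H5
  · intro u um
    constructor
    · have K1 : B (E (P u)) + B (E (Rm um)) + B (Ep (Rp u)) = B u := by
        have := congrArg B (hleft u um).1; simpa [map_add] using this
      have K2 : B u + ε • B (E (Q u)) = u := F2 u
      simp only [ContinuousLinearMap.add_apply, ContinuousLinearMap.smul_apply,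
        ContinuousLinearMap.comp_apply, map_add, map_smul, map_sub]
      linear_combination (norm := module) K1 + K2
    · have M1 : Em (P u) + Em (Rm um) + Emp (Rp u) = um := by
        have := (hleft u um).2; simpa [map_add] using this
      have M2 : Em (Q (B (E (P u)))) + Em (Q (B (E (Rm um)))) + Em (Q (B (Ep (Rp u))))
          = Em (Q (B u)) := by
        have := congrArg (fun x => Em (Q (B x))) (hleft u um).1
        simpa [map_add] using this
      have M3 : Em (Q (B u)) + ε • Em (Q (B (E (Q u)))) = Em (Q u) := by
        have := congrArg (fun x => Em (Q x)) (F2 u); simpa [map_add, map_smul] using this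
      simp only [ContinuousLinearMap.add_apply, ContinuousLinearMap.smul_apply,
        ContinuousLinearMap.sub_apply, ContinuousLinearMap.comp_apply, map_add, map_smul, map_sub]
      linear_combination (norm := module) M1 - ε • M2 - ε • M3
  · simp only [hterm]
    exact hsum.map L.toLinearMap.toAddMonoidHom L.continuous
  · have h2 : (∑' k : ℕ, ((-1 : ℂ) ^ (k + 1) * ε ^ (k + 1)) •
        (Em.comp (Q.comp (((E.comp Q) ^ k).comp Ep)))) = L B := by
      simp only [hterm]
      exact (L.map_tsum hsum).symm
    rw [h2, hLx, sub_eq_add_neg, ← neg_smul, ContinuousLinearMap.comp_assoc]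
end

section
/- Let a Grushin problem for P : H₁ → H₂ be well posed with inverse blocks E, E₊, E₋, E₋₊. Then E₋ : H₂ → H₋ is surjective, and for every v ∈ H₂ one has v ∈ range P if and only if E₋ v ∈ range E₋₊. Consequently E₋ induces a linear bijection from the quotient H₂ / range P onto the quotient H₋ / range E₋₊. -/
/-! The second row of `ℰ 𝒫 = 1` says `E₋ R₋ = 1`, so `E₋` is onto, and `E₋ P = -E₋₊ R₊`, so
`E₋` maps `range P` into `range E₋₊`. Conversely, if `E₋ v = E₋₊ w`, the first row of
`𝒫 ℰ = 1` applied to `(v, -w)` gives `v = P (E v - E₊ w)`. Thus `range P` is the preimage of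
`range E₋₊` under the surjection `E₋`, which therefore descends to an isomorphism of quotients. -/

section Quotient

variable {R M N : Type*} [Ring R] [AddCommGroup M] [Module R M] [AddCommGroup N] [Module R N]

theorem Submodule.exists_quotientEquiv_of_surjective_of_comap_eq (f : M →ₗ[R] N)
    (hf : Function.Surjective f) {p : Submodule R M} {q : Submodule R N} (hpq : q.comap f = p) :
    ∃ φ : (M ⧸ p) ≃ₗ[R] (N ⧸ q), ∀ x, φ (Submodule.Quotient.mk x) = Submodule.Quotient.mk (f x) := by
  have hker : LinearMap.ker (q.mkQ ∘ₗ f) = p := by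
    rw [LinearMap.ker_comp, Submodule.ker_mkQ, hpq]
  exact ⟨(Submodule.quotEquivOfEq _ _ hker.symm).trans
    ((q.mkQ ∘ₗ f).quotKerEquivOfSurjective (q.mkQ_surjective.comp hf)), fun _ => rfl⟩

end Quotient

section Grushin

variable {R H₁ H₂ Hm Hp : Type*} [Ring R]
  [AddCommGroup H₁] [Module R H₁] [AddCommGroup H₂] [Module R H₂]
  [AddCommGroup Hm] [Module R Hm] [AddCommGroup Hp] [Module R Hp]
  {P : H₁ →ₗ[R] H₂} {Rm : Hm →ₗ[R] H₂} {Rp : H₁ →ₗ[R] Hp}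
  {E : H₂ →ₗ[R] H₁} {Ep : Hp →ₗ[R] H₁} {Em : H₂ →ₗ[R] Hm} {Emp : Hp →ₗ[R] Hm}

theorem grushin_leftInverse_Em_Rm (hleft : ∀ u um, Em (P u + Rm um) + Emp (Rp u) = um) :
    Function.LeftInverse Em Rm := fun um => by
  simpa using hleft 0 um

theorem grushin_range_le_comap_range (hleft : ∀ u um, Em (P u + Rm um) + Emp (Rp u) = um) :
    LinearMap.range P ≤ (LinearMap.range Emp).comap Em := by
  rintro _ ⟨u, rfl⟩
  have hEmP : Em (P u) + Emp (Rp u) = 0 := by simpa using hleft u 0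
  exact ⟨-Rp u, by rw [map_neg, eq_neg_of_add_eq_zero_left hEmP]⟩

theorem grushin_comap_range_le_range
    (hright : ∀ v vp, P (E v + Ep vp) + Rm (Em v + Emp vp) = v) :
    (LinearMap.range Emp).comap Em ≤ LinearMap.range P := by
  rintro v ⟨w, hw⟩
  refine ⟨E v + Ep (-w), ?_⟩
  simpa [hw] using hright v (-w)

end Grushin

theorem stmt_8_general
    {H₁ H₂ Hm Hp : Type*}
    [NormedAddCommGroup H₁] [NormedSpace ℂ H₁]
    [NormedAddCommGroup H₂] [NormedSpace ℂ H₂]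
    [NormedAddCommGroup Hm] [NormedSpace ℂ Hm]
    [NormedAddCommGroup Hp] [NormedSpace ℂ Hp]
    (P : H₁ →L[ℂ] H₂) (Rm : Hm →L[ℂ] H₂) (Rp : H₁ →L[ℂ] Hp)
    (E : H₂ →L[ℂ] H₁) (Ep : Hp →L[ℂ] H₁) (Em : H₂ →L[ℂ] Hm) (Emp : Hp →L[ℂ] Hm)
    (hright : ∀ (v : H₂) (vp : Hp),
      P (E v + Ep vp) + Rm (Em v + Emp vp) = v ∧ Rp (E v + Ep vp) = vp)
    (hleft : ∀ (u : H₁) (um : Hm),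
      E (P u + Rm um) + Ep (Rp u) = u ∧ Em (P u + Rm um) + Emp (Rp u) = um) :
    Function.Surjective Em ∧
    (∀ v : H₂, v ∈ LinearMap.range (P : H₁ →ₗ[ℂ] H₂) ↔ Em v ∈ LinearMap.range (Emp : Hp →ₗ[ℂ] Hm)) ∧
    ∃ φ : (H₂ ⧸ LinearMap.range (P : H₁ →ₗ[ℂ] H₂)) ≃ₗ[ℂ] (Hm ⧸ LinearMap.range (Emp : Hp →ₗ[ℂ] Hm)),
      ∀ v : H₂, φ (Submodule.Quotient.mk v) = Submodule.Quotient.mk (Em v) := by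
  have hleft₂ : ∀ u um, (Em : H₂ →ₗ[ℂ] Hm) ((P : H₁ →ₗ[ℂ] H₂) u + (Rm : Hm →ₗ[ℂ] H₂) um) +
      (Emp : Hp →ₗ[ℂ] Hm) ((Rp : H₁ →ₗ[ℂ] Hp) u) = um := fun u um => (hleft u um).2
  have hsurj : Function.Surjective Em := (grushin_leftInverse_Em_Rm hleft₂).surjective
  have hcomap : (LinearMap.range (Emp : Hp →ₗ[ℂ] Hm)).comap (Em : H₂ →ₗ[ℂ] Hm) =
      LinearMap.range (P : H₁ →ₗ[ℂ] H₂) :=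
    le_antisymm (grushin_comap_range_le_range fun v vp => (hright v vp).1)
      (grushin_range_le_comap_range hleft₂)
  exact ⟨hsurj, fun v => by rw [← hcomap]; rfl,
    Submodule.exists_quotientEquiv_of_surjective_of_comap_eq _ hsurj hcomap⟩

/-- For a well-posed Grushin problem with inverse blocks `E, E₊, E₋, E₋₊`:
`E₋` is surjective, `v ∈ range P ↔ E₋ v ∈ range E₋₊`, and `E₋` induces a linear
bijection `H₂ / range P ≃ H₋ / range E₋₊`. -/
theorem stmt_8
    {H₁ H₂ Hm Hp : Type*}
    [NormedAddCommGroup H₁] [NormedSpace ℂ H₁] [CompleteSpace H₁]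
    [NormedAddCommGroup H₂] [NormedSpace ℂ H₂] [CompleteSpace H₂]
    [NormedAddCommGroup Hm] [NormedSpace ℂ Hm] [CompleteSpace Hm]
    [NormedAddCommGroup Hp] [NormedSpace ℂ Hp] [CompleteSpace Hp]
    (P : H₁ →L[ℂ] H₂) (Rm : Hm →L[ℂ] H₂) (Rp : H₁ →L[ℂ] Hp)
    (E : H₂ →L[ℂ] H₁) (Ep : Hp →L[ℂ] H₁) (Em : H₂ →L[ℂ] Hm) (Emp : Hp →L[ℂ] Hm)
    (hright : ∀ (v : H₂) (vp : Hp),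
      P (E v + Ep vp) + Rm (Em v + Emp vp) = v ∧ Rp (E v + Ep vp) = vp)
    (hleft : ∀ (u : H₁) (um : Hm),
      E (P u + Rm um) + Ep (Rp u) = u ∧ Em (P u + Rm um) + Emp (Rp u) = um) :
    Function.Surjective Em ∧
    (∀ v : H₂, v ∈ LinearMap.range (P : H₁ →ₗ[ℂ] H₂) ↔ Em v ∈ LinearMap.range (Emp : Hp →ₗ[ℂ] Hm)) ∧
    ∃ φ : (H₂ ⧸ LinearMap.range (P : H₁ →ₗ[ℂ] H₂)) ≃ₗ[ℂ] (Hm ⧸ LinearMap.range (Emp : Hp →ₗ[ℂ] Hm)),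
      ∀ v : H₂, φ (Submodule.Quotient.mk v) = Submodule.Quotient.mk (Em v) :=
  stmt_8_general P Rm Rp E Ep Em Emp hright hleft
end

section
/- Let a Grushin problem for P : H₁ → H₂ be well posed with inverse blocks E, E₊, E₋, E₋₊. Then ker P is finite dimensional if and only if ker E₋₊ is, the quotient H₂ / range P is finite dimensional if and only if H₋ / range E₋₊ is, and when all four spaces are finite dimensional, dim ker P = dim ker E₋₊, dim(H₂ / range P) = dim(H₋ / range E₋₊), and hence the indices agree: dim ker P − dim(H₂ / range P) = dim ker E₋₊ − dim(H₋ / range E₋₊) as integers. -/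
/-!
A well-posed Grushin problem is a linear equivalence `𝒫 : H₁ × H₋ ≃ H₂ × H₊`, and the block
identities of `ℰ𝒫 = 1` and `𝒫ℰ = 1` say that `R₊, E₊` restrict to mutually inverse maps between
`ker P` and `ker E₋₊`, while `E₋, R₋` descend to mutually inverse maps between `H₂ / range P` and
`H₋ / range E₋₊`. This is pure linear algebra, valid for modules over any ring.
-/

open LinearMap Submodule

section

variable {R M N X Y : Type*} [Ring R] [AddCommGroup M] [Module R M] [AddCommGroup N] [Module R N]
  [AddCommGroup X] [Module R X] [AddCommGroup Y] [Module R Y]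
  {f : M →ₗ[R] N} {g : M →ₗ[R] X} {h : N →ₗ[R] Y} {k : X →ₗ[R] Y}

theorem map_mem_ker_of_add_eq_zero (hfg : ∀ u, h (f u) + k (g u) = 0) {u : M} (hu : u ∈ ker f) :
    g u ∈ ker k := by
  simpa [mem_ker.1 hu] using hfg u

theorem map_mem_range_of_add_eq_zero (hfg : ∀ u, h (f u) + k (g u) = 0) {v : N}
    (hv : v ∈ range f) : h v ∈ range k := by
  obtain ⟨u, rfl⟩ := hv
  exact ⟨-g u, by rw [map_neg, neg_eq_iff_add_eq_zero, add_comm, hfg]⟩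

end

namespace Grushin

variable {R M₁ M₂ Mm Mp : Type*} [Ring R]
  [AddCommGroup M₁] [Module R M₁] [AddCommGroup M₂] [Module R M₂]
  [AddCommGroup Mm] [Module R Mm] [AddCommGroup Mp] [Module R Mp]
  {P : M₁ →ₗ[R] M₂} {Rm : Mm →ₗ[R] M₂} {Rp : M₁ →ₗ[R] Mp}
  {E : M₂ →ₗ[R] M₁} {Ep : Mp →ₗ[R] M₁} {Em : M₂ →ₗ[R] Mm} {Emp : Mp →ₗ[R] Mm}

def kerEquiv (hEP : ∀ u, E (P u) + Ep (Rp u) = u) (hEmP : ∀ u, Em (P u) + Emp (Rp u) = 0)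
    (hPEp : ∀ w, P (Ep w) + Rm (Emp w) = 0) (hRpEp : ∀ w, Rp (Ep w) = w) :
    ker P ≃ₗ[R] ker Emp :=
  .ofLinearMap
    (Rp.restrict fun _ ↦ map_mem_ker_of_add_eq_zero hEmP)
    (Ep.restrict fun _ ↦ map_mem_ker_of_add_eq_zero fun w ↦ (add_comm _ _).trans (hPEp w))
    (by ext ⟨w, _⟩; exact hRpEp w)
    (by ext ⟨u, hu⟩; simpa [mem_ker.1 hu] using hEP u)

def cokerEquiv (hPE : ∀ v, P (E v) + Rm (Em v) = v) (hEmRm : ∀ w, Em (Rm w) = w)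
    (hEmP : ∀ u, Em (P u) + Emp (Rp u) = 0) (hPEp : ∀ w, P (Ep w) + Rm (Emp w) = 0) :
    (M₂ ⧸ range P) ≃ₗ[R] (Mm ⧸ range Emp) :=
  .ofLinearMap
    (mapQ _ _ Em fun _ ↦ map_mem_range_of_add_eq_zero hEmP)
    (mapQ _ _ Rm fun _ ↦ map_mem_range_of_add_eq_zero fun w ↦ (add_comm _ _).trans (hPEp w))
    (by ext w; simp [hEmRm])
    (by
      ext v
      refine (Submodule.Quotient.eq _).2 ⟨-E v, ?_⟩
      rw [map_neg, neg_eq_iff_eq_neg, neg_sub, eq_sub_iff_add_eq]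
      exact hPE v)

end Grushin

theorem stmt_9_general
    {H₁ H₂ Hm Hp : Type*}
    [NormedAddCommGroup H₁] [NormedSpace ℂ H₁]
    [NormedAddCommGroup H₂] [NormedSpace ℂ H₂]
    [NormedAddCommGroup Hm] [NormedSpace ℂ Hm]
    [NormedAddCommGroup Hp] [NormedSpace ℂ Hp]
    (P : H₁ →L[ℂ] H₂) (Rm : Hm →L[ℂ] H₂) (Rp : H₁ →L[ℂ] Hp)
    (E : H₂ →L[ℂ] H₁) (Ep : Hp →L[ℂ] H₁) (Em : H₂ →L[ℂ] Hm) (Emp : Hp →L[ℂ] Hm)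
    (hright : ∀ (v : H₂) (vp : Hp),
      P (E v + Ep vp) + Rm (Em v + Emp vp) = v ∧ Rp (E v + Ep vp) = vp)
    (hleft : ∀ (u : H₁) (um : Hm),
      E (P u + Rm um) + Ep (Rp u) = u ∧ Em (P u + Rm um) + Emp (Rp u) = um) :
    (FiniteDimensional ℂ (LinearMap.ker (P : H₁ →ₗ[ℂ] H₂)) ↔ FiniteDimensional ℂ (LinearMap.ker (Emp : Hp →ₗ[ℂ] Hm))) ∧
    (FiniteDimensional ℂ (H₂ ⧸ LinearMap.range (P : H₁ →ₗ[ℂ] H₂)) ↔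
      FiniteDimensional ℂ (Hm ⧸ LinearMap.range (Emp : Hp →ₗ[ℂ] Hm))) ∧
    (FiniteDimensional ℂ (LinearMap.ker (P : H₁ →ₗ[ℂ] H₂)) →
      FiniteDimensional ℂ (LinearMap.ker (Emp : Hp →ₗ[ℂ] Hm)) →
      FiniteDimensional ℂ (H₂ ⧸ LinearMap.range (P : H₁ →ₗ[ℂ] H₂)) →
      FiniteDimensional ℂ (Hm ⧸ LinearMap.range (Emp : Hp →ₗ[ℂ] Hm)) →
      (Module.finrank ℂ (LinearMap.ker (P : H₁ →ₗ[ℂ] H₂)) = Module.finrank ℂ (LinearMap.ker (Emp : Hp →ₗ[ℂ] Hm)) ∧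
       Module.finrank ℂ (H₂ ⧸ LinearMap.range (P : H₁ →ₗ[ℂ] H₂)) =
         Module.finrank ℂ (Hm ⧸ LinearMap.range (Emp : Hp →ₗ[ℂ] Hm)) ∧
       (Module.finrank ℂ (LinearMap.ker (P : H₁ →ₗ[ℂ] H₂)) : ℤ) -
         Module.finrank ℂ (H₂ ⧸ LinearMap.range (P : H₁ →ₗ[ℂ] H₂)) =
       (Module.finrank ℂ (LinearMap.ker (Emp : Hp →ₗ[ℂ] Hm)) : ℤ) -
         Module.finrank ℂ (Hm ⧸ LinearMap.range (Emp : Hp →ₗ[ℂ] Hm)))) := by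
  have hEP u : E (P u) + Ep (Rp u) = u := by simpa using (hleft u 0).1
  have hEmP u : Em (P u) + Emp (Rp u) = 0 := by simpa using (hleft u 0).2
  have hEmRm w : Em (Rm w) = w := by simpa using (hleft 0 w).2
  have hPE v : P (E v) + Rm (Em v) = v := by simpa using (hright v 0).1
  have hPEp w : P (Ep w) + Rm (Emp w) = 0 := by simpa using (hright 0 w).1
  have hRpEp w : Rp (Ep w) = w := by simpa using (hright 0 w).2
  let eKer := Grushin.kerEquiv (P := P.toLinearMap) (Rm := Rm.toLinearMap)
    (Rp := Rp.toLinearMap) (E := E.toLinearMap) (Ep := Ep.toLinearMap) (Em := Em.toLinearMap)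
    (Emp := Emp.toLinearMap) hEP hEmP hPEp hRpEp
  let eCoker := Grushin.cokerEquiv (P := P.toLinearMap) (Rm := Rm.toLinearMap)
    (Rp := Rp.toLinearMap) (E := E.toLinearMap) (Ep := Ep.toLinearMap) (Em := Em.toLinearMap)
    (Emp := Emp.toLinearMap) hPE hEmRm hEmP hPEp
  refine ⟨Module.Finite.equiv_iff eKer, Module.Finite.equiv_iff eCoker, fun _ _ _ _ ↦ ?_⟩
  have hKer := eKer.finrank_eq
  have hCoker := eCoker.finrank_eq
  exact ⟨hKer, hCoker, by rw [hKer, hCoker]⟩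

/-- For a well-posed Grushin problem with inverse blocks `E, E₊, E₋, E₋₊`:
`ker P` is finite dimensional iff `ker E₋₊` is; `H₂ / range P` is finite dimensional
iff `H₋ / range E₋₊` is; and when all four are finite dimensional the dimensions of
kernels and cokernels agree, so the indices agree. -/
theorem stmt_9
    {H₁ H₂ Hm Hp : Type*}
    [NormedAddCommGroup H₁] [NormedSpace ℂ H₁] [CompleteSpace H₁]
    [NormedAddCommGroup H₂] [NormedSpace ℂ H₂] [CompleteSpace H₂]
    [NormedAddCommGroup Hm] [NormedSpace ℂ Hm] [CompleteSpace Hm]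
    [NormedAddCommGroup Hp] [NormedSpace ℂ Hp] [CompleteSpace Hp]
    (P : H₁ →L[ℂ] H₂) (Rm : Hm →L[ℂ] H₂) (Rp : H₁ →L[ℂ] Hp)
    (E : H₂ →L[ℂ] H₁) (Ep : Hp →L[ℂ] H₁) (Em : H₂ →L[ℂ] Hm) (Emp : Hp →L[ℂ] Hm)
    (hright : ∀ (v : H₂) (vp : Hp),
      P (E v + Ep vp) + Rm (Em v + Emp vp) = v ∧ Rp (E v + Ep vp) = vp)
    (hleft : ∀ (u : H₁) (um : Hm),
      E (P u + Rm um) + Ep (Rp u) = u ∧ Em (P u + Rm um) + Emp (Rp u) = um) :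
    (FiniteDimensional ℂ (LinearMap.ker (P : H₁ →ₗ[ℂ] H₂)) ↔ FiniteDimensional ℂ (LinearMap.ker (Emp : Hp →ₗ[ℂ] Hm))) ∧
    (FiniteDimensional ℂ (H₂ ⧸ LinearMap.range (P : H₁ →ₗ[ℂ] H₂)) ↔
      FiniteDimensional ℂ (Hm ⧸ LinearMap.range (Emp : Hp →ₗ[ℂ] Hm))) ∧
    (FiniteDimensional ℂ (LinearMap.ker (P : H₁ →ₗ[ℂ] H₂)) →
      FiniteDimensional ℂ (LinearMap.ker (Emp : Hp →ₗ[ℂ] Hm)) →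
      FiniteDimensional ℂ (H₂ ⧸ LinearMap.range (P : H₁ →ₗ[ℂ] H₂)) →
      FiniteDimensional ℂ (Hm ⧸ LinearMap.range (Emp : Hp →ₗ[ℂ] Hm)) →
      (Module.finrank ℂ (LinearMap.ker (P : H₁ →ₗ[ℂ] H₂)) = Module.finrank ℂ (LinearMap.ker (Emp : Hp →ₗ[ℂ] Hm)) ∧
       Module.finrank ℂ (H₂ ⧸ LinearMap.range (P : H₁ →ₗ[ℂ] H₂)) =
         Module.finrank ℂ (Hm ⧸ LinearMap.range (Emp : Hp →ₗ[ℂ] Hm)) ∧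
       (Module.finrank ℂ (LinearMap.ker (P : H₁ →ₗ[ℂ] H₂)) : ℤ) -
         Module.finrank ℂ (H₂ ⧸ LinearMap.range (P : H₁ →ₗ[ℂ] H₂)) =
       (Module.finrank ℂ (LinearMap.ker (Emp : Hp →ₗ[ℂ] Hm)) : ℤ) -
         Module.finrank ℂ (Hm ⧸ LinearMap.range (Emp : Hp →ₗ[ℂ] Hm)))) :=
  stmt_9_general P Rm Rp E Ep Em Emp hright hleft
end

section
/- Let H be a complex Banach space, Ω ⊆ ℂ an open connected set, and A : Ω → L(H, H) an analytic family of bounded operators such that for every z ∈ Ω the kernel of A(z) and the quotient H / range A(z) are finite dimensional. If A(z₀) is bijective for some z₀ ∈ Ω, then the set of z ∈ Ω at which A(z) fails to be bijective is discrete in Ω, and the function z ↦ A(z)⁻¹ (defined as the inverse in the Banach algebra L(H, H) where it exists, and 0 elsewhere) is meromorphic on Ω. -/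
/-!
Near a point `z₁`, border `A z` by finite-dimensional spaces: with `K = ker (A z₁)`, `N` a
complement of `range (A z₁)` and `π : H → K` a continuous projection, the operator
`[[A z, N ↪ H], [π, 0]] : H × N → H × K` is invertible at `z₁`, hence near `z₁`, with an analytic
inverse `[[α, β], [γ, δ]]`. Then `A z` is invertible iff the finite-dimensional block
`δ z : K → N` is, and `(A z)⁻¹ = α - β δ⁻¹ γ`. Either `δ` is nowhere invertible near `z₁` (if
`dim K ≠ dim N` or `det δ ≡ 0`), or `det δ` has an isolated zero and `δ⁻¹ = det⁻¹ • adj` is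
meromorphic. Points of either kind form open sets, so by connectedness all points of `Ω` are of
the second kind, since `z₀` is.
-/

open ContinuousLinearMap Filter Function Topology
open scoped ContDiff

theorem map_ringInverse {M N F : Type*} [MonoidWithZero M] [MonoidWithZero N] [EquivLike F M N]
    [MulEquivClass F M N] (e : F) (x : M) : Ring.inverse (e x) = e (Ring.inverse x) := by
  by_cases hx : IsUnit x
  · obtain ⟨u, rfl⟩ := hx
    rw [Ring.inverse_unit]
    exact Ring.inverse_unit (Units.map (e : M →* N) u) |>.trans (Units.coe_map_inv _ u)
  · rw [Ring.inverse_non_unit x hx, map_zero, Ring.inverse_non_unit]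
    rwa [isUnit_map_iff e x]

theorem ContinuousLinearMap.isUnit_iff_isInvertible {R M : Type*} [Semiring R]
    [TopologicalSpace M] [AddCommMonoid M] [Module R M] {f : M →L[R] M} :
    IsUnit f ↔ f.IsInvertible :=
  ⟨fun ⟨u, hu⟩ => ⟨ContinuousLinearEquiv.unitsEquiv R M u, hu⟩,
    fun ⟨e, he⟩ => ⟨(ContinuousLinearEquiv.unitsEquiv R M).symm e, he⟩⟩

section Analytic

variable {𝕜 : Type*} [NontriviallyNormedField 𝕜]
  {E F G : Type*} [NormedAddCommGroup E] [NormedSpace 𝕜 E]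
  [NormedAddCommGroup F] [NormedSpace 𝕜 F] [NormedAddCommGroup G] [NormedSpace 𝕜 G]

theorem AnalyticAt.clm_comp {f : 𝕜 → F →L[𝕜] G} {g : 𝕜 → E →L[𝕜] F} {x : 𝕜}
    (hf : AnalyticAt 𝕜 f x) (hg : AnalyticAt 𝕜 g x) :
    AnalyticAt 𝕜 (fun z => (f z).comp (g z)) x :=
  ((compL 𝕜 E F G).analyticAt_bilinear (f x, g x)).comp₂ hf hg

theorem MeromorphicAt.clm_comp {f : 𝕜 → F →L[𝕜] G} {g : 𝕜 → E →L[𝕜] F} {x : 𝕜}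
    (hf : MeromorphicAt f x) (hg : MeromorphicAt g x) :
    MeromorphicAt (fun z => (f z).comp (g z)) x := by
  obtain ⟨m, hm⟩ := hf
  obtain ⟨n, hn⟩ := hg
  refine ⟨m + n, (hm.clm_comp hn).congr (Eventually.of_forall fun z => ?_)⟩
  simp only [pow_add, mul_smul, comp_smul, smul_comp]
  exact smul_comm _ _ _

theorem AnalyticAt.clm_inverse [CompleteSpace E] {f : 𝕜 → E →L[𝕜] F} {x : 𝕜}
    (hf : AnalyticAt 𝕜 f x) (hx : (f x).IsInvertible) :
    AnalyticAt 𝕜 (fun z => (f z).inverse) x := by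
  obtain ⟨e, he⟩ := hx
  exact (he ▸ (contDiffAt_map_inverse (n := ω) e).analyticAt).comp hf

theorem AnalyticAt.matrix_det {n : Type*} [Fintype n] [DecidableEq n] {M : E → Matrix n n 𝕜}
    {x : E} (hM : ∀ i j, AnalyticAt 𝕜 (fun z => M z i j) x) :
    AnalyticAt 𝕜 (fun z => (M z).det) x := by
  simp only [Matrix.det_apply']
  exact Finset.analyticAt_fun_sum _ fun σ _ =>
    analyticAt_const.mul (Finset.analyticAt_fun_prod _ fun i _ => hM (σ i) i)

theorem AnalyticAt.matrix_adjugate {n : Type*} [Fintype n] [DecidableEq n] {M : E → Matrix n n 𝕜}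
    {x : E} (hM : ∀ i j, AnalyticAt 𝕜 (fun z => M z i j) x) (i j : n) :
    AnalyticAt 𝕜 (fun z => (M z).adjugate i j) x := by
  simp only [Matrix.adjugate_apply]
  refine AnalyticAt.matrix_det fun k l => ?_
  by_cases hk : k = j
  · simp only [Matrix.updateRow_apply, if_pos hk]
    exact analyticAt_const
  · simp only [Matrix.updateRow_apply, if_neg hk]
    exact hM k l

end Analytic

theorem LinearMap.analyticAt_comp_of_finiteDimensional {𝕜 : Type*} [NontriviallyNormedField 𝕜]
    [CompleteSpace 𝕜] {F G : Type*} [NormedAddCommGroup F] [NormedSpace 𝕜 F] [FiniteDimensional 𝕜 F]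
    [NormedAddCommGroup G] [NormedSpace 𝕜 G] (L : F →ₗ[𝕜] G) {f : 𝕜 → F} {x : 𝕜}
    (hf : AnalyticAt 𝕜 f x) : AnalyticAt 𝕜 (fun z => L (f z)) x :=
  (LinearMap.toContinuousLinearMap L).analyticAt _ |>.comp hf

section FiniteDimensional

variable {K : Type*} [NormedAddCommGroup K] [NormedSpace ℂ K] [FiniteDimensional ℂ K]

theorem AnalyticAt.eventually_not_isUnit_or_meromorphicAt_ringInverse_of_finiteDimensional
    {g : ℂ → K →L[ℂ] K} {z : ℂ}
    (hg : AnalyticAt ℂ g z) :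
    (∀ᶠ w in 𝓝 z, ¬IsUnit (g w)) ∨
      ((∀ᶠ w in 𝓝[≠] z, IsUnit (g w)) ∧ MeromorphicAt (fun w => Ring.inverse (g w)) z) := by
  classical
  let Ψ := (Matrix.toLinAlgEquiv (Module.finBasis ℂ K)).trans (Module.End.toContinuousLinearMap K)
  set M := fun w => Ψ.symm (g w)
  have hM : ∀ i j, AnalyticAt ℂ (fun w => M w i j) z := fun i j =>
    ((Matrix.entryLinearMap ℂ ℂ i j).comp Ψ.symm.toLinearMap).analyticAt_comp_of_finiteDimensional
      hg
  have hadj : AnalyticAt ℂ (fun w => Ψ (M w).adjugate) z := by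
    have : AnalyticAt ℂ (fun w i j => (M w).adjugate i j) z :=
      analyticAt_pi_iff.2 fun i => analyticAt_pi_iff.2 fun j => AnalyticAt.matrix_adjugate hM i j
    exact (Ψ.toLinearMap.comp (Matrix.ofLinearEquiv ℂ).toLinearMap)
      |>.analyticAt_comp_of_finiteDimensional this
  have hunit : ∀ w, IsUnit (g w) ↔ (M w).det ≠ 0 := fun w => by
    rw [← Ψ.apply_symm_apply (g w), isUnit_map_iff, Matrix.isUnit_iff_isUnit_det,
      isUnit_iff_ne_zero]
  have hinv : ∀ w, Ring.inverse (g w) = ((M w).det)⁻¹ • Ψ (M w).adjugate := fun w => by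
    rw [← Ψ.apply_symm_apply (g w), map_ringInverse, ← Matrix.nonsing_inv_eq_ringInverse,
      Matrix.inv_def, map_smul, Ring.inverse_eq_inv']
  rcases (AnalyticAt.matrix_det hM).eventually_eq_zero_or_eventually_ne_zero with h | h
  · exact .inl (h.mono fun w hw => by rw [hunit]; exact not_not.2 hw)
  · refine .inr ⟨h.mono fun w hw => (hunit w).2 hw, ?_⟩
    simp only [hinv]
    exact (AnalyticAt.matrix_det hM).meromorphicAt.inv.smul hadj.meromorphicAt

end FiniteDimensional

theorem AnalyticAt.eventually_not_isInvertible_or_meromorphicAt_inverse {K N : Type*}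
    [NormedAddCommGroup K] [NormedSpace ℂ K] [FiniteDimensional ℂ K]
    [NormedAddCommGroup N] [NormedSpace ℂ N] [FiniteDimensional ℂ N]
    {g : ℂ → K →L[ℂ] N} {z : ℂ} (hg : AnalyticAt ℂ g z) :
    (∀ᶠ w in 𝓝 z, ¬(g w).IsInvertible) ∨
      ((∀ᶠ w in 𝓝[≠] z, (g w).IsInvertible) ∧ MeromorphicAt (fun w => (g w).inverse) z) := by
  by_cases hrank : Module.finrank ℂ K = Module.finrank ℂ N
  · obtain ⟨φ⟩ := FiniteDimensional.nonempty_continuousLinearEquiv_of_finrank_eq hrank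
    have := ((analyticAt_const (v := (φ.symm : N →L[ℂ] K))).clm_comp hg)
      |>.eventually_not_isUnit_or_meromorphicAt_ringInverse_of_finiteDimensional
    simp only [isUnit_iff_isInvertible, isInvertible_equiv_comp] at this
    refine this.imp_right fun h => ⟨h.1, ?_⟩
    simp only [inverse_eq_ringInverse φ]
    exact h.2.clm_comp analyticAt_const.meromorphicAt
  · exact .inl (.of_forall fun w ⟨e, _⟩ => hrank e.toLinearEquiv.finrank_eq)

section BorderedOperator

variable {H N K : Type*} [NormedAddCommGroup H] [NormedSpace ℂ H]
  [NormedAddCommGroup N] [NormedSpace ℂ N] [NormedAddCommGroup K] [NormedSpace ℂ K]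
  {a : H →L[ℂ] H} {j : N →L[ℂ] H} {p : H →L[ℂ] K}

/-- The block operator `[[a, j], [p, 0]] : H × N → H × K`. -/
def borderedOperator (a : H →L[ℂ] H) (j : N →L[ℂ] H) (p : H →L[ℂ] K) : H × N →L[ℂ] H × K :=
  (a.coprod j).prod (p ∘L fst ℂ H N)

@[simp]
theorem borderedOperator_apply (x : H) (n : N) : borderedOperator a j p (x, n) = (a x + j n, p x) :=
  rfl

theorem analyticAt_borderedOperator {A : ℂ → H →L[ℂ] H} {z : ℂ} (hA : AnalyticAt ℂ A z) :
    AnalyticAt ℂ (fun w => borderedOperator (A w) j p) z := by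
  have h (w : ℂ) :
      borderedOperator (A w) j p = inl ℂ H K ∘L A w ∘L fst ℂ H N + borderedOperator 0 j p := by
    ext <;> simp
  simp only [h]
  exact (analyticAt_const.clm_comp (hA.clm_comp analyticAt_const)).add analyticAt_const

theorem inverse_borderedOperator_apply (hT : (borderedOperator a j p).IsInvertible) (x : H)
    (n : N) :
    (borderedOperator a j p).inverse (a x + j n, p x) = (x, n) := by
  simpa using hT.inverse_apply_self (x, n)

theorem isInvertible_lowerRight_of_isUnit (hT : (borderedOperator a j p).IsInvertible)
    (ha : IsUnit a) :
    (snd ℂ H N ∘L (borderedOperator a j p).inverse ∘L inr ℂ H K).IsInvertible := by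
  obtain ⟨u, rfl⟩ := ha
  set b : H →L[ℂ] H := ↑u⁻¹
  have hab (y : H) : u.val (b y) = y := congr($(u.mul_inv) y)
  have hba (x : H) : b (u.val x) = x := congr($(u.inv_mul) x)
  -- `borderedOperator a j p (-a⁻¹ (j n), n) = (0, -p (a⁻¹ (j n)))`
  refine IsInvertible.of_inverse (g := -(p ∘L b ∘L j)) ?_ ?_
  · ext n
    have h := inverse_borderedOperator_apply hT (-b (j n)) n
    rw [map_neg, hab, neg_add_cancel, map_neg] at h
    show ((borderedOperator u.val j p).inverse (0, -p (b (j n)))).2 = n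
    rw [h]
  · ext k
    have h := hT.self_apply_inverse (0, k)
    rcases hq : (borderedOperator u.val j p).inverse (0, k) with ⟨x, n⟩
    rw [hq, borderedOperator_apply, Prod.mk.injEq] at h
    show -p (b (j ((borderedOperator u.val j p).inverse (0, k)).2)) = k
    rw [hq, ← h.2, ← hba x, eq_neg_of_add_eq_zero_left h.1, map_neg, map_neg]

theorem isUnit_and_ringInverse_eq_of_isInvertible_lowerRight
    (hT : (borderedOperator a j p).IsInvertible)
    (hδ : (snd ℂ H N ∘L (borderedOperator a j p).inverse ∘L inr ℂ H K).IsInvertible) :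
    IsUnit a ∧ Ring.inverse a = fst ℂ H N ∘L (borderedOperator a j p).inverse ∘L inl ℂ H K -
      (fst ℂ H N ∘L (borderedOperator a j p).inverse ∘L inr ℂ H K) ∘L
        (snd ℂ H N ∘L (borderedOperator a j p).inverse ∘L inr ℂ H K).inverse ∘L
          (snd ℂ H N ∘L (borderedOperator a j p).inverse ∘L inl ℂ H K) := by
  set S := (borderedOperator a j p).inverse
  set α := fst ℂ H N ∘L S ∘L inl ℂ H K
  set β := fst ℂ H N ∘L S ∘L inr ℂ H K
  set γ := snd ℂ H N ∘L S ∘L inl ℂ H K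
  set δ := snd ℂ H N ∘L S ∘L inr ℂ H K
  have hS (y : H) (k : K) : S (y, k) = (α y + β k, γ y + δ k) := by
    rw [show (y, k) = inl ℂ H K y + inr ℂ H K k by simp, map_add]
    rfl
  have haC : a * (α - β ∘L δ.inverse ∘L γ) = 1 := by
    ext y
    have h := hT.self_apply_inverse (y, -δ.inverse (γ y))
    rw [hS, map_neg δ, hδ.self_apply_inverse, add_neg_cancel, borderedOperator_apply, map_zero,
      add_zero, Prod.mk.injEq] at h
    simpa [sub_eq_add_neg] using h.1
  have hCa : (α - β ∘L δ.inverse ∘L γ) * a = 1 := by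
    ext x
    have h := inverse_borderedOperator_apply hT x 0
    rw [map_zero, add_zero, hS, Prod.mk.injEq] at h
    have hp : p x = -δ.inverse (γ (a x)) := by
      rw [← hδ.inverse_apply_self (p x), eq_neg_of_add_eq_zero_right h.2, map_neg]
    simpa [sub_eq_add_neg, hp] using h.1
  exact ⟨⟨⟨a, _, haC, hCa⟩, rfl⟩, Ring.inverse_unit ⟨a, _, haC, hCa⟩⟩

theorem bijective_borderedOperator {N : Submodule ℂ H}
    (hN : IsCompl (LinearMap.range (a : H →ₗ[ℂ] H)) N) {p : H →L[ℂ] LinearMap.ker (a : H →ₗ[ℂ] H)}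
    (hp : ∀ k : LinearMap.ker (a : H →ₗ[ℂ] H), p k = k) :
    Bijective (borderedOperator a N.subtypeL p) := by
  constructor
  · refine (injective_iff_map_eq_zero _).2 fun ⟨x, n⟩ h => ?_
    rw [borderedOperator_apply, Prod.mk_eq_zero] at h
    have hax : a x = 0 := Submodule.disjoint_def.1 hN.disjoint _ ⟨x, rfl⟩
      (by rw [eq_neg_of_add_eq_zero_left h.1]; exact neg_mem n.2)
    have hx : x = 0 := by
      simpa [hp ⟨x, hax⟩] using congr_arg Subtype.val h.2
    simp_all
  · rintro ⟨y, k⟩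
    obtain ⟨_, ⟨x, rfl⟩, n, hn, hy⟩ :=
      Submodule.mem_sup.1 (hN.sup_eq_top ▸ Submodule.mem_top (x := y))
    refine ⟨(x + (k - p x : LinearMap.ker (a : H →ₗ[ℂ] H)), ⟨n, hn⟩), ?_⟩
    simpa [hp] using hy

theorem exists_isInvertible_borderedOperator [CompleteSpace H] (a : H →L[ℂ] H)
    [FiniteDimensional ℂ (LinearMap.ker (a : H →ₗ[ℂ] H))]
    [FiniteDimensional ℂ (H ⧸ LinearMap.range (a : H →ₗ[ℂ] H))] :
    ∃ (N : Submodule ℂ H) (p : H →L[ℂ] LinearMap.ker (a : H →ₗ[ℂ] H)),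
      FiniteDimensional ℂ N ∧ (borderedOperator a N.subtypeL p).IsInvertible := by
  obtain ⟨p, hp⟩ :=
    Submodule.ClosedComplemented.of_finiteDimensional (LinearMap.ker (a : H →ₗ[ℂ] H))
  obtain ⟨N, hN⟩ := (LinearMap.range (a : H →ₗ[ℂ] H)).exists_isCompl
  have : FiniteDimensional ℂ N := (Submodule.quotientEquivOfIsCompl _ _ hN).finiteDimensional
  have hT := bijective_borderedOperator hN hp
  exact ⟨N, p, this,
    .ofBijective _ (LinearMap.ker_eq_bot.2 hT.1) (LinearMap.range_eq_top.2 hT.2), rfl⟩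

theorem AnalyticAt.eventually_not_isUnit_or_meromorphicAt_ringInverse_of_isInvertible_bordered
    [CompleteSpace H] [FiniteDimensional ℂ N] [FiniteDimensional ℂ K] {A : ℂ → H →L[ℂ] H} {z : ℂ}
    (hA : AnalyticAt ℂ A z) (hT : (borderedOperator (A z) j p).IsInvertible) :
    (∀ᶠ w in 𝓝 z, ¬IsUnit (A w)) ∨
      ((∀ᶠ w in 𝓝[≠] z, IsUnit (A w)) ∧ MeromorphicAt (fun w => Ring.inverse (A w)) z) := by
  have hTA := analyticAt_borderedOperator (j := j) (p := p) hA
  have hinv : ∀ᶠ w in 𝓝 z, (borderedOperator (A w) j p).IsInvertible :=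
    hTA.continuousAt.eventually_mem (ContinuousLinearEquiv.isOpen.mem_nhds hT)
  have hS := hTA.clm_inverse hT
  have hδA : AnalyticAt ℂ
      (fun w => snd ℂ H N ∘L (borderedOperator (A w) j p).inverse ∘L inr ℂ H K) z :=
    analyticAt_const.clm_comp (hS.clm_comp analyticAt_const)
  rcases hδA.eventually_not_isInvertible_or_meromorphicAt_inverse with hδ | ⟨hδ, hmero⟩
  · left
    filter_upwards [hinv, hδ] with w hT hδ ha
    exact hδ (isInvertible_lowerRight_of_isUnit hT ha)
  · have h : ∀ᶠ w in 𝓝[≠] z, _ := (hinv.filter_mono nhdsWithin_le_nhds).and hδ |>.mono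
      fun w ⟨hT, hδ⟩ => isUnit_and_ringInverse_eq_of_isInvertible_lowerRight hT hδ
    refine .inr ⟨h.mono fun _ => And.left, ?_⟩
    refine MeromorphicAt.congr ?_ (h.mono fun _ h => h.2.symm)
    exact (analyticAt_const.clm_comp (hS.clm_comp analyticAt_const)).meromorphicAt.sub
      ((analyticAt_const.clm_comp (hS.clm_comp analyticAt_const)).meromorphicAt.clm_comp
        (hmero.clm_comp (analyticAt_const.clm_comp (hS.clm_comp analyticAt_const)).meromorphicAt))

end BorderedOperator

theorem AnalyticAt.eventually_not_isUnit_or_meromorphicAt_ringInverse {H : Type*}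
    [NormedAddCommGroup H] [NormedSpace ℂ H] [CompleteSpace H] {A : ℂ → H →L[ℂ] H} {z : ℂ}
    (hA : AnalyticAt ℂ A z) [hker : FiniteDimensional ℂ (LinearMap.ker (A z : H →ₗ[ℂ] H))]
    [hcoker : FiniteDimensional ℂ (H ⧸ LinearMap.range (A z : H →ₗ[ℂ] H))] :
    (∀ᶠ w in 𝓝 z, ¬IsUnit (A w)) ∨
      ((∀ᶠ w in 𝓝[≠] z, IsUnit (A w)) ∧ MeromorphicAt (fun w => Ring.inverse (A w)) z) := by
  obtain ⟨N, p, _, hT⟩ := exists_isInvertible_borderedOperator (A z)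
  exact hA.eventually_not_isUnit_or_meromorphicAt_ringInverse_of_isInvertible_bordered hT

theorem IsPreconnected.eventually_nhdsNE_of_eventually_nhdsNE_or_eventually_not {X : Type*}
    [TopologicalSpace X] [T1Space X] [∀ x : X, (𝓝[≠] x).NeBot] {Ω : Set X}
    (hΩ : IsPreconnected Ω) {P : X → Prop}
    (hP : ∀ z ∈ Ω, (∀ᶠ w in 𝓝 z, ¬P w) ∨ ∀ᶠ w in 𝓝[≠] z, P w) {z₀ : X} (hz₀ : z₀ ∈ Ω)
    (hP₀ : ∀ᶠ w in 𝓝[≠] z₀, P w) : ∀ z ∈ Ω, ∀ᶠ w in 𝓝[≠] z, P w := by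
  have hopen : IsOpen {z | ∀ᶠ w in 𝓝[≠] z, P w} := isOpen_iff_mem_nhds.2 fun z
      (hz : ∀ᶠ w in 𝓝[≠] z, P w) => by
    rw [← nhdsNE_sup_pure, mem_sup]
    refine ⟨?_, hz⟩
    rw [← eventually_nhdsNE_eventually_nhds_iff] at hz
    exact hz.mono fun _ => eventually_nhdsWithin_of_eventually_nhds
  have hdisj : Disjoint {z | ∀ᶠ w in 𝓝[≠] z, P w} {z | ∀ᶠ w in 𝓝 z, ¬P w} :=
    Set.disjoint_left.2 fun z (h : ∀ᶠ w in 𝓝[≠] z, P w) =>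
      h.frequently.filter_mono nhdsWithin_le_nhds
  exact hΩ.subset_left_of_subset_union hopen isOpen_setOfPred_eventually_nhds hdisj
    (fun z hz => (hP z hz).symm) ⟨z₀, hz₀, hP₀⟩

theorem stmt_10_general
    {H : Type*} [NormedAddCommGroup H] [NormedSpace ℂ H] [CompleteSpace H]
    (Ω : Set ℂ) (hconn : IsPreconnected Ω)
    (A : ℂ → H →L[ℂ] H) (hA : AnalyticOnNhd ℂ A Ω)
    (hker : ∀ z ∈ Ω, FiniteDimensional ℂ (LinearMap.ker (A z : H →ₗ[ℂ] H)))
    (hcoker : ∀ z ∈ Ω, FiniteDimensional ℂ (H ⧸ LinearMap.range (A z : H →ₗ[ℂ] H)))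
    (z₀ : ℂ) (hz₀ : z₀ ∈ Ω) (hbij : Function.Bijective (A z₀)) :
    (∀ z ∈ Ω, ∀ᶠ w in nhdsWithin z {z}ᶜ, Function.Bijective (A w)) ∧
    MeromorphicOn (fun z => Ring.inverse (A z)) Ω := by
  have hlocal (z : ℂ) (hz : z ∈ Ω) :=
    (hA z hz).eventually_not_isUnit_or_meromorphicAt_ringInverse (hker := hker z hz)
      (hcoker := hcoker z hz)
  have hunit₀ : ∀ᶠ w in 𝓝 z₀, IsUnit (A w) :=
    (hA z₀ hz₀).continuousAt.eventually_mem (Units.isOpen.mem_nhds (isUnit_iff_bijective.2 hbij))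
  have hunit : ∀ z ∈ Ω, ∀ᶠ w in 𝓝[≠] z, IsUnit (A w) :=
    hconn.eventually_nhdsNE_of_eventually_nhdsNE_or_eventually_not
      (fun z hz => (hlocal z hz).imp_right And.left) hz₀ (hunit₀.filter_mono nhdsWithin_le_nhds)
  refine ⟨fun z hz => (hunit z hz).mono fun _ => isUnit_iff_bijective.1, fun z hz => ?_⟩
  exact ((hlocal z hz).resolve_left ((hunit z hz).frequently.filter_mono nhdsWithin_le_nhds)).2

/-- Analytic Fredholm theory: if `A : Ω → L(H,H)` is an analytic family of Fredholm
operators on a connected open set `Ω ⊆ ℂ` and `A(z₀)` is bijective at some `z₀ ∈ Ω`,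
then the set of points where `A(z)` fails to be bijective is discrete in `Ω` and
`z ↦ A(z)⁻¹` is meromorphic on `Ω`. -/
theorem stmt_10
    {H : Type*} [NormedAddCommGroup H] [NormedSpace ℂ H] [CompleteSpace H]
    (Ω : Set ℂ) (hΩ : IsOpen Ω) (hconn : IsPreconnected Ω)
    (A : ℂ → H →L[ℂ] H) (hA : AnalyticOnNhd ℂ A Ω)
    (hker : ∀ z ∈ Ω, FiniteDimensional ℂ (LinearMap.ker (A z : H →ₗ[ℂ] H)))
    (hcoker : ∀ z ∈ Ω, FiniteDimensional ℂ (H ⧸ LinearMap.range (A z : H →ₗ[ℂ] H)))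
    (z₀ : ℂ) (hz₀ : z₀ ∈ Ω) (hbij : Function.Bijective (A z₀)) :
    (∀ z ∈ Ω, ∀ᶠ w in nhdsWithin z {z}ᶜ, Function.Bijective (A w)) ∧
    MeromorphicOn (fun z => Ring.inverse (A z)) Ω :=
  stmt_10_general Ω hconn A hA hker hcoker z₀ hz₀ hbij
end

section
/- Let n₁, n₂ ∈ ℕ and let 𝒜 : ℝ → M_{n₁+n₂}(ℂ) be a matrix-valued function, written in block form with blocks A₁₁(t) ∈ M_{n₁}(ℂ), A₁₂(t), A₂₁(t), A₂₂(t) ∈ M_{n₂}(ℂ). Suppose 𝒜 is differentiable at t₀, 𝒜(t₀) is invertible, and A₂₂(t₀) is invertible; write ℬ(t) = 𝒜(t)⁻¹ (so ℬ is differentiable at t₀) with blocks B₁₁, B₁₂, B₂₁, B₂₂. Then B₁₁(t₀) is invertible and tr(B₁₁(t₀)⁻¹ · B₁₁′(t₀)) = tr(A₂₂(t₀)⁻¹ · A₂₂′(t₀)) − tr(𝒜′(t₀) · ℬ(t₀)), where ′ denotes the derivative at t₀. -/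
/-!
Write `ℬ = 𝒜⁻¹`. Differentiating `ℬ 𝒜 = 1` gives `ℬ' = -ℬ 𝒜' ℬ`. With the Schur complement
`S = A₁₁ - A₁₂ A₂₂⁻¹ A₂₁` and `Ŝ = diag(S, 0)`, a block computation gives
`𝒜 - 𝒜 diag(0, A₂₂⁻¹) 𝒜 = Ŝ`, i.e. `ℬ Ŝ ℬ = ℬ - diag(0, A₂₂⁻¹)`. Reading off the upper left block
of `ℬ Ŝ = 1 - diag(0, A₂₂⁻¹) 𝒜` shows `B₁₁ S = 1`, and then
`tr(B₁₁⁻¹ B₁₁') = -tr(Ŝ ℬ 𝒜' ℬ) = -tr(𝒜' ℬ Ŝ ℬ) = tr(A₂₂⁻¹ A₂₂') - tr(𝒜' ℬ)`.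
-/

open Matrix Topology

namespace Matrix

section Blocks

variable {m n α : Type*}

theorem toBlocks₁₁_neg [Neg α] (M : Matrix (m ⊕ n) (m ⊕ n) α) :
    (-M).toBlocks₁₁ = -M.toBlocks₁₁ :=
  rfl

variable [Fintype m] [Fintype n]

theorem trace_fromBlocks [AddCommMonoid α] (A : Matrix m m α) (B : Matrix m n α)
    (C : Matrix n m α) (D : Matrix n n α) : trace (fromBlocks A B C D) = trace A + trace D := by
  simp [trace, Fintype.sum_sum_type]

theorem trace_mul_toBlocks₁₁ [NonUnitalNonAssocSemiring α] (X : Matrix m m α)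
    (Y : Matrix (m ⊕ n) (m ⊕ n) α) :
    trace (X * Y.toBlocks₁₁) = trace (fromBlocks X 0 0 0 * Y) := by
  conv_rhs => rw [← fromBlocks_toBlocks Y]
  simp [fromBlocks_multiply, trace_fromBlocks]

theorem trace_mul_fromBlocks_zero_zero_zero [NonUnitalNonAssocSemiring α]
    (Y : Matrix (m ⊕ n) (m ⊕ n) α) (Z : Matrix n n α) :
    trace (Y * fromBlocks 0 0 0 Z) = trace (Y.toBlocks₂₂ * Z) := by
  conv_lhs => rw [← fromBlocks_toBlocks Y]
  simp [fromBlocks_multiply, trace_fromBlocks]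

variable [DecidableEq m] [DecidableEq n] [CommRing α]

noncomputable def schurCompl₂₂ (M : Matrix (m ⊕ n) (m ⊕ n) α) : Matrix m m α :=
  M.toBlocks₁₁ - M.toBlocks₁₂ * M.toBlocks₂₂⁻¹ * M.toBlocks₂₁

theorem fromBlocks_schurCompl₂₂ (M : Matrix (m ⊕ n) (m ⊕ n) α) (hD : IsUnit M.toBlocks₂₂) :
    fromBlocks M.schurCompl₂₂ 0 0 0 = M - M * fromBlocks 0 0 0 M.toBlocks₂₂⁻¹ * M := by
  have hdet := (isUnit_iff_isUnit_det _).mp hD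
  conv_rhs => rw [← fromBlocks_toBlocks M]
  rw [sub_eq_add_neg, fromBlocks_multiply, fromBlocks_multiply, fromBlocks_neg, fromBlocks_add]
  simp [schurCompl₂₂, nonsing_inv_mul _ hdet, mul_nonsing_inv_cancel_left _ _ hdet,
    Matrix.mul_assoc, sub_eq_add_neg]

theorem inv_mul_fromBlocks_schurCompl₂₂_mul_inv (M : Matrix (m ⊕ n) (m ⊕ n) α) (hM : IsUnit M)
    (hD : IsUnit M.toBlocks₂₂) :
    M⁻¹ * fromBlocks M.schurCompl₂₂ 0 0 0 * M⁻¹ = M⁻¹ - fromBlocks 0 0 0 M.toBlocks₂₂⁻¹ := by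
  have hdet := (isUnit_iff_isUnit_det _).mp hM
  rw [fromBlocks_schurCompl₂₂ M hD]
  simp [Matrix.mul_sub, Matrix.sub_mul, Matrix.mul_assoc, nonsing_inv_mul_cancel_left _ _ hdet,
    mul_nonsing_inv _ hdet]

theorem toBlocks₁₁_inv_mul_schurCompl₂₂ (M : Matrix (m ⊕ n) (m ⊕ n) α) (hM : IsUnit M)
    (hD : IsUnit M.toBlocks₂₂) : M⁻¹.toBlocks₁₁ * M.schurCompl₂₂ = 1 := by
  have hdet := (isUnit_iff_isUnit_det _).mp hM
  have h := congrArg (· * M) (inv_mul_fromBlocks_schurCompl₂₂_mul_inv M hM hD)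
  simp only [Matrix.sub_mul, nonsing_inv_mul_cancel_right _ _ hdet, nonsing_inv_mul _ hdet] at h
  have h11 := congrArg toBlocks₁₁ h
  generalize M⁻¹ = B, M.schurCompl₂₂ = S, M.toBlocks₂₂⁻¹ = E at h11
  rw [← fromBlocks_toBlocks B, ← fromBlocks_toBlocks M] at h11
  rw [← fromBlocks_one, fromBlocks_multiply, fromBlocks_multiply, sub_eq_add_neg, fromBlocks_neg,
    fromBlocks_add] at h11
  simpa using h11

theorem inv_toBlocks₁₁_inv (M : Matrix (m ⊕ n) (m ⊕ n) α) (hM : IsUnit M)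
    (hD : IsUnit M.toBlocks₂₂) : (M⁻¹.toBlocks₁₁)⁻¹ = M.schurCompl₂₂ :=
  inv_eq_right_inv (toBlocks₁₁_inv_mul_schurCompl₂₂ M hM hD)

theorem isUnit_toBlocks₁₁_inv (M : Matrix (m ⊕ n) (m ⊕ n) α) (hM : IsUnit M)
    (hD : IsUnit M.toBlocks₂₂) : IsUnit M⁻¹.toBlocks₁₁ :=
  (isUnit_iff_isUnit_det _).mpr
    (isUnit_det_of_right_inverse (toBlocks₁₁_inv_mul_schurCompl₂₂ M hM hD))

theorem trace_inv_toBlocks₁₁_inv_mul_toBlocks₁₁ (M X : Matrix (m ⊕ n) (m ⊕ n) α) (hM : IsUnit M)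
    (hD : IsUnit M.toBlocks₂₂) :
    trace ((M⁻¹.toBlocks₁₁)⁻¹ * (M⁻¹ * X * M⁻¹).toBlocks₁₁) =
      trace (X * M⁻¹) - trace (M.toBlocks₂₂⁻¹ * X.toBlocks₂₂) := by
  calc trace ((M⁻¹.toBlocks₁₁)⁻¹ * (M⁻¹ * X * M⁻¹).toBlocks₁₁)
      = trace (fromBlocks M.schurCompl₂₂ 0 0 0 * M⁻¹ * X * M⁻¹) := by
        rw [inv_toBlocks₁₁_inv M hM hD, trace_mul_toBlocks₁₁]; simp only [Matrix.mul_assoc]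
    _ = trace (X * (M⁻¹ * fromBlocks M.schurCompl₂₂ 0 0 0 * M⁻¹)) := by
        rw [trace_mul_comm, ← Matrix.mul_assoc, trace_mul_comm]; simp only [Matrix.mul_assoc]
    _ = trace (X * M⁻¹) - trace (M.toBlocks₂₂⁻¹ * X.toBlocks₂₂) := by
        rw [inv_mul_fromBlocks_schurCompl₂₂_mul_inv M hM hD, Matrix.mul_sub, trace_sub,
          trace_mul_fromBlocks_zero_zero_zero, trace_mul_comm X.toBlocks₂₂]

end Blocks

section Deriv

variable {𝕜 𝔸 l m n : Type*} [NontriviallyNormedField 𝕜] [Fintype m]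

theorem hasDerivAt_mul_apply [NormedRing 𝔸] [NormedAlgebra 𝕜 𝔸]
    {f : 𝕜 → Matrix l m 𝔸} {g : 𝕜 → Matrix m n 𝔸} {f' : Matrix l m 𝔸} {g' : Matrix m n 𝔸} {x : 𝕜}
    (hf : ∀ i j, HasDerivAt (fun t => f t i j) (f' i j) x)
    (hg : ∀ i j, HasDerivAt (fun t => g t i j) (g' i j) x) (i : l) (k : n) :
    HasDerivAt (fun t => (f t * g t) i k) ((f' * g x + f x * g') i k) x := by
  simp only [mul_apply, add_apply, ← Finset.sum_add_distrib]
  exact HasDerivAt.fun_sum fun j _ => (hf i j).mul (hg j k)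

theorem eventually_isUnit_of_hasDerivAt [DecidableEq m] [NormedField 𝔸] [NormedAlgebra 𝕜 𝔸]
    {f : 𝕜 → Matrix m m 𝔸} {f' : Matrix m m 𝔸} {x : 𝕜}
    (hf : ∀ i j, HasDerivAt (fun t => f t i j) (f' i j) x) (hx : IsUnit (f x)) :
    ∀ᶠ t in 𝓝 x, IsUnit (f t) := by
  have hcont : ContinuousAt f x :=
    continuousAt_pi.2 fun i => continuousAt_pi.2 fun j => (hf i j).continuousAt
  have hdet := (continuous_id.matrix_det.continuousAt.comp hcont).eventually_ne
    ((isUnit_iff_isUnit_det _).mp hx).ne_zero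
  filter_upwards [hdet] with t ht
  exact (isUnit_iff_isUnit_det _).mpr (isUnit_iff_ne_zero.mpr ht)

theorem eq_neg_inv_mul_mul_inv_of_hasDerivAt [DecidableEq m] [NormedField 𝔸]
    [NormedAlgebra 𝕜 𝔸] {f : 𝕜 → Matrix m m 𝔸} {f' g' : Matrix m m 𝔸} {x : 𝕜}
    (hf : ∀ i j, HasDerivAt (fun t => f t i j) (f' i j) x)
    (hg : ∀ i j, HasDerivAt (fun t => (f t)⁻¹ i j) (g' i j) x) (hx : IsUnit (f x)) :
    g' = -((f x)⁻¹ * f' * (f x)⁻¹) := by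
  have hsum : g' * f x + (f x)⁻¹ * f' = 0 := by
    ext i j
    refine (hasDerivAt_mul_apply hg hf i j).unique ?_
    refine (hasDerivAt_const x ((1 : Matrix m m 𝔸) i j)).congr_of_eventuallyEq ?_
    filter_upwards [eventually_isUnit_of_hasDerivAt hf hx] with t ht
    rw [nonsing_inv_mul _ ((isUnit_iff_isUnit_det _).mp ht)]
  have hdet := (isUnit_iff_isUnit_det _).mp hx
  rw [← mul_nonsing_inv_cancel_right (f x) g' hdet, eq_neg_of_add_eq_zero_left hsum, Matrix.neg_mul]

end Deriv

end Matrix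

/-- Differentiated Schur complement trace identity for block matrices: if `𝒜(t)` is
invertible and differentiable at `t₀` with invertible block `A₂₂(t₀)`, and
`ℬ(t) = 𝒜(t)⁻¹`, then `B₁₁(t₀)` is invertible and
`tr(B₁₁⁻¹ B₁₁′) = tr(A₂₂⁻¹ A₂₂′) − tr(𝒜′ ℬ)` at `t₀`. -/
theorem stmt_11
    {n₁ n₂ : ℕ}
    (𝒜 : ℝ → Matrix (Fin n₁ ⊕ Fin n₂) (Fin n₁ ⊕ Fin n₂) ℂ)
    (A' B' : Matrix (Fin n₁ ⊕ Fin n₂) (Fin n₁ ⊕ Fin n₂) ℂ)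
    (t₀ : ℝ)
    (hA' : ∀ i j, HasDerivAt (fun t => 𝒜 t i j) (A' i j) t₀)
    (hB' : ∀ i j, HasDerivAt (fun t => (𝒜 t)⁻¹ i j) (B' i j) t₀)
    (hinv : IsUnit (𝒜 t₀))
    (h22 : IsUnit ((𝒜 t₀).toBlocks₂₂)) :
    IsUnit (((𝒜 t₀)⁻¹).toBlocks₁₁) ∧
    Matrix.trace ((((𝒜 t₀)⁻¹).toBlocks₁₁)⁻¹ * B'.toBlocks₁₁) =
      Matrix.trace (((𝒜 t₀).toBlocks₂₂)⁻¹ * A'.toBlocks₂₂) -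
        Matrix.trace (A' * (𝒜 t₀)⁻¹) := by
  refine ⟨isUnit_toBlocks₁₁_inv _ hinv h22, ?_⟩
  have hB : B' = -((𝒜 t₀)⁻¹ * A' * (𝒜 t₀)⁻¹) := eq_neg_inv_mul_mul_inv_of_hasDerivAt hA' hB' hinv
  rw [hB, toBlocks₁₁_neg, Matrix.mul_neg, trace_neg,
    trace_inv_toBlocks₁₁_inv_mul_toBlocks₁₁ _ _ hinv h22, neg_sub]
end

section
/- Let a Grushin problem for P : H₁ → H₂ with operators R₋ : H₋ → H₂, R₊ : H₁ → H₊ be well posed with inverse blocks E, E₊, E₋, E₋₊. Let R̃₋ : H̃₋ → H₂ and R̃₊ : H₁ → H̃₊ be bounded operators, and define 𝒢 : H̃₋ × H₊ → H̃₊ × H₋ by 𝒢(ũ₋, v₊) = (−R̃₊(E(R̃₋ ũ₋)) + R̃₊(E₊ v₊), −E₋(R̃₋ ũ₋) + E₋₊ v₊). Then the Grushin problem 𝒫̃ : H₁ × H̃₋ → H₂ × H̃₊, 𝒫̃(u, ũ₋) = (P u + R̃₋ ũ₋, R̃₊ u), is bijective if and only if 𝒢 is bijective; and in that case, writing Ẽ,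 Ẽ₊, Ẽ₋, Ẽ₋₊ for the inverse blocks of 𝒫̃, the inverse of 𝒢 is σ ∘ 𝒢̃ ∘ σ, where 𝒢̃(u₋, ṽ₊) = (−R₊(Ẽ(R₋ u₋)) + R₊(Ẽ₊ ṽ₊), −Ẽ₋(R₋ u₋) + Ẽ₋₊ ṽ₊) and σ denotes the coordinate swap of a product of two spaces. -/
/-- From one Grushin problem to another: given a well-posed Grushin problem for `P`
with operators `R₋, R₊` and blocks `E, E₊, E₋, E₋₊`, and new operators `R̃₋, R̃₊`,
the new Grushin problem `𝒫̃` is bijective iff the operator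
`𝒢(ũ₋, v₊) = (−R̃₊ E R̃₋ ũ₋ + R̃₊ E₊ v₊, −E₋ R̃₋ ũ₋ + E₋₊ v₊)` is bijective, and in
that case `𝒢⁻¹ = σ ∘ 𝒢̃ ∘ σ` with `𝒢̃` built from the blocks of `𝒫̃⁻¹`. -/
theorem stmt_12
    {H₁ H₂ Hm Hp Km Kp : Type*}
    [NormedAddCommGroup H₁] [NormedSpace ℂ H₁] [CompleteSpace H₁]
    [NormedAddCommGroup H₂] [NormedSpace ℂ H₂] [CompleteSpace H₂]
    [NormedAddCommGroup Hm] [NormedSpace ℂ Hm] [CompleteSpace Hm]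
    [NormedAddCommGroup Hp] [NormedSpace ℂ Hp] [CompleteSpace Hp]
    [NormedAddCommGroup Km] [NormedSpace ℂ Km] [CompleteSpace Km]
    [NormedAddCommGroup Kp] [NormedSpace ℂ Kp] [CompleteSpace Kp]
    (P : H₁ →L[ℂ] H₂) (Rm : Hm →L[ℂ] H₂) (Rp : H₁ →L[ℂ] Hp)
    (E : H₂ →L[ℂ] H₁) (Ep : Hp →L[ℂ] H₁) (Em : H₂ →L[ℂ] Hm) (Emp : Hp →L[ℂ] Hm)
    (hright : ∀ (v : H₂) (vp : Hp),
      P (E v + Ep vp) + Rm (Em v + Emp vp) = v ∧ Rp (E v + Ep vp) = vp)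
    (hleft : ∀ (u : H₁) (um : Hm),
      E (P u + Rm um) + Ep (Rp u) = u ∧ Em (P u + Rm um) + Emp (Rp u) = um)
    -- the new operators `R̃₋ : K₋ → H₂`, `R̃₊ : H₁ → K₊`
    (Sm : Km →L[ℂ] H₂) (Sp : H₁ →L[ℂ] Kp)
    -- the operator `𝒢`
    (𝒢 : (Km × Hp) →L[ℂ] (Kp × Hm))
    (h𝒢 : ∀ x : Km × Hp,
      𝒢 x = (Sp (Ep x.2) - Sp (E (Sm x.1)), Emp x.2 - Em (Sm x.1)))
    -- the new Grushin problem `𝒫̃`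
    (𝒫' : (H₁ × Km) →L[ℂ] (H₂ × Kp))
    (h𝒫' : ∀ x : H₁ × Km, 𝒫' x = (P x.1 + Sm x.2, Sp x.1)) :
    (Function.Bijective 𝒫' ↔ Function.Bijective 𝒢) ∧
    -- when it is, for the inverse blocks `Ẽ, Ẽ₊, Ẽ₋, Ẽ₋₊` of `𝒫̃`,
    -- `σ ∘ 𝒢̃ ∘ σ` is a two-sided inverse of `𝒢`
    (∀ (E' : H₂ →L[ℂ] H₁) (Ep' : Kp →L[ℂ] H₁) (Em' : H₂ →L[ℂ] Km)
        (Emp' : Kp →L[ℂ] Km),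
      (∀ (v : H₂) (vp : Kp),
        P (E' v + Ep' vp) + Sm (Em' v + Emp' vp) = v ∧ Sp (E' v + Ep' vp) = vp) →
      (∀ (u : H₁) (um : Km),
        E' (P u + Sm um) + Ep' (Sp u) = u ∧ Em' (P u + Sm um) + Emp' (Sp u) = um) →
      ((∀ w : Kp × Hm,
          𝒢 (Emp' w.1 - Em' (Rm w.2), Rp (Ep' w.1) - Rp (E' (Rm w.2))) = w) ∧
       (∀ x : Km × Hp,
          (Emp' (𝒢 x).1 - Em' (Rm (𝒢 x).2),
            Rp (Ep' (𝒢 x).1) - Rp (E' (Rm (𝒢 x).2))) = x))) := by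

  -- pointwise identities from `ℰ ∘ 𝒫 = id`
  have hA1 : ∀ u : H₁, E (P u) = u - Ep (Rp u) := by
    intro u
    have h := (hleft u 0).1
    simp only [map_zero, add_zero] at h
    exact eq_sub_of_add_eq h
  have hA2 : ∀ um : Hm, E (Rm um) = 0 := by
    intro um
    have h := (hleft 0 um).1
    simpa using h
  have hA3 : ∀ u : H₁, Em (P u) = -(Emp (Rp u)) := by
    intro u
    have h := (hleft u 0).2
    simp only [map_zero, add_zero] at h
    exact eq_neg_of_add_eq_zero_left h
  have hA4 : ∀ um : Hm, Em (Rm um) = um := by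
    intro um
    have h := (hleft 0 um).2
    simpa using h
  -- pointwise identities from `𝒫 ∘ ℰ = id`
  have hB1 : ∀ v : H₂, P (E v) = v - Rm (Em v) := by
    intro v
    have h := (hright v 0).1
    simp only [map_zero, add_zero] at h
    exact eq_sub_of_add_eq h
  have hB2 : ∀ vp : Hp, P (Ep vp) = -(Rm (Emp vp)) := by
    intro vp
    have h := (hright 0 vp).1
    simp only [map_zero, zero_add] at h
    exact eq_neg_of_add_eq_zero_left h
  have hB3 : ∀ v : H₂, Rp (E v) = 0 := by
    intro v
    have h := (hright v 0).2
    simpa using h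
  have hB4 : ∀ vp : Hp, Rp (Ep vp) = vp := by
    intro vp
    have h := (hright 0 vp).2
    simpa using h
  -- forward key lemma
  have key1 : ∀ (u : H₁) (t : Km) (v : H₂) (w : Kp),
      P u + Sm t = v → Sp u = w → 𝒢 (t, Rp u) = (w - Sp (E v), -(Em v)) := by
    intro u t v w h1 h2
    have hSm : Sm t = v - P u := eq_sub_of_add_eq' h1
    rw [h𝒢, Prod.ext_iff]
    constructor
    · simp only [hSm, map_sub, hA1, h2]
      abel
    · simp only [hSm, map_sub, hA3]
      abel
  -- backward key lemma
  have key2 : ∀ (v : H₂) (t : Km) (z : Hp),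
      𝒫' (E v - E (Sm t) + Ep z, t)
        = (v - Rm ((𝒢 (t, z)).2 + Em v), (𝒢 (t, z)).1 + Sp (E v)) := by
    intro v t z
    rw [h𝒫', h𝒢, Prod.ext_iff]
    constructor
    · simp only [map_add, map_sub, map_neg, hB1, hB2]
      abel
    · simp only [map_add, map_sub]
      abel
  have hRpu : ∀ (v : H₂) (t : Km) (z : Hp), Rp (E v - E (Sm t) + Ep z) = z := by
    intro v t z
    simp [map_add, map_sub, hB3, hB4]
  constructor
  · -- the bijectivity equivalence
    constructor
    · intro hbij
      constructor
      · -- 𝒢 injective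
        intro x y hxy
        have h0 : 𝒢 (x - y) = 0 := by rw [map_sub, hxy, sub_self]
        set p := x - y with hp
        have hk := key2 0 p.1 p.2
        have hpeta : (p.1, p.2) = p := rfl
        rw [hpeta, h0] at hk
        simp only [map_zero, add_zero, zero_add, sub_zero, Prod.fst_zero, Prod.snd_zero,
          zero_sub, neg_zero] at hk
        have h00 : 𝒫' (-E (Sm p.1) + Ep p.2, p.1) = 𝒫' 0 := by
          rw [hk, map_zero]
          exact Prod.ext rfl rfl
        have hz := hbij.1 h00
        have h1 : p.1 = 0 := congrArg Prod.snd hz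
        have hu0 : -E (Sm p.1) + Ep p.2 = 0 := congrArg Prod.fst hz
        have h2 : p.2 = 0 := by
          have h3 : Rp (-E (Sm p.1) + Ep p.2) = p.2 := by
            simp [map_add, map_neg, hB3, hB4]
          rw [hu0, map_zero] at h3
          exact h3.symm
        have : p = 0 := Prod.ext h1 h2
        exact sub_eq_zero.mp (hp ▸ this)
      · -- 𝒢 surjective
        intro w
        obtain ⟨⟨u, t⟩, hu⟩ := hbij.2 (-(Rm w.2), w.1 + Sp (E (-(Rm w.2))))
        rw [h𝒫', Prod.mk.injEq] at hu
        obtain ⟨h1, h2⟩ := hu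
        refine ⟨(t, Rp u), ?_⟩
        rw [key1 u t _ _ h1 h2]
        refine Prod.ext ?_ ?_
        · simp
        · simp [hA4]
    · intro hbij
      constructor
      · -- 𝒫' injective
        intro x y hxy
        have h0 : 𝒫' (x - y) = 0 := by rw [map_sub, hxy, sub_self]
        set p := x - y with hp
        have hpeta : (p.1, p.2) = p := rfl
        rw [← hpeta, h𝒫'] at h0
        have h1 : P p.1 + Sm p.2 = 0 := by
          have := congrArg Prod.fst h0; simpa using this
        have h2 : Sp p.1 = 0 := by
          have := congrArg Prod.snd h0; simpa using this
        have hk := key1 p.1 p.2 0 0 h1 h2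
        simp only [map_zero, sub_zero, neg_zero, zero_sub] at hk
        have h𝒢0 : 𝒢 (p.2, Rp p.1) = 𝒢 0 := by
          rw [hk, map_zero]; exact Prod.ext rfl rfl
        have hz := hbij.1 h𝒢0
        have hp2 : p.2 = 0 := congrArg Prod.fst hz
        have hRp1 : Rp p.1 = 0 := congrArg Prod.snd hz
        have hP1 : P p.1 = 0 := by
          rw [hp2, map_zero, add_zero] at h1; exact h1
        have hp1 : p.1 = 0 := by
          have := hA1 p.1
          rw [hP1, hRp1, map_zero, map_zero] at this
          symm; simpa using this
        have : p = 0 := Prod.ext hp1 hp2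
        exact sub_eq_zero.mp (hp ▸ this)
      · -- 𝒫' surjective
        rintro ⟨v, w⟩
        obtain ⟨⟨t, z⟩, hq⟩ := hbij.2 (w - Sp (E v), -(Em v))
        refine ⟨(E v - E (Sm t) + Ep z, t), ?_⟩
        rw [key2 v t z, hq]
        refine Prod.ext ?_ ?_
        · simp
        · simp
  · -- the inverse formula
    intro E' Ep' Em' Emp' hright' hleft'
    have hC1 : ∀ u : H₁, E' (P u) = u - Ep' (Sp u) := by
      intro u
      have h := (hleft' u 0).1
      simp only [map_zero, add_zero] at h
      exact eq_sub_of_add_eq h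
    have hC2 : ∀ um : Km, E' (Sm um) = 0 := by
      intro um
      have h := (hleft' 0 um).1
      simpa using h
    have hC3 : ∀ u : H₁, Em' (P u) = -(Emp' (Sp u)) := by
      intro u
      have h := (hleft' u 0).2
      simp only [map_zero, add_zero] at h
      exact eq_neg_of_add_eq_zero_left h
    have hC4 : ∀ um : Km, Em' (Sm um) = um := by
      intro um
      have h := (hleft' 0 um).2
      simpa using h
    have hD1 : ∀ v : H₂, P (E' v) = v - Sm (Em' v) := by
      intro v
      have h := (hright' v 0).1
      simp only [map_zero, add_zero] at h
      exact eq_sub_of_add_eq h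
    have hD2 : ∀ vp : Kp, P (Ep' vp) = -(Sm (Emp' vp)) := by
      intro vp
      have h := (hright' 0 vp).1
      simp only [map_zero, zero_add] at h
      exact eq_neg_of_add_eq_zero_left h
    have hD3 : ∀ v : H₂, Sp (E' v) = 0 := by
      intro v
      have h := (hright' v 0).2
      simpa using h
    have hD4 : ∀ vp : Kp, Sp (Ep' vp) = vp := by
      intro vp
      have h := (hright' 0 vp).2
      simpa using h
    have hSmEmp' : ∀ vp : Kp, Sm (Emp' vp) = -(P (Ep' vp)) := by
      intro vp; rw [hD2, neg_neg]
    have hSmEm' : ∀ v : H₂, Sm (Em' v) = v - P (E' v) := by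
      intro v; rw [hD1]; abel
    have hRmEmp : ∀ vp : Hp, Rm (Emp vp) = -(P (Ep vp)) := by
      intro vp; rw [hB2, neg_neg]
    have hRmEm : ∀ v : H₂, Rm (Em v) = v - P (E v) := by
      intro v; rw [hB1]; abel
    constructor
    · intro w
      rw [h𝒢, Prod.ext_iff]
      constructor
      · simp only [map_sub, map_neg, hSmEmp', hSmEm', hA1, hA2, hD3, hD4, map_zero,
          sub_zero, zero_sub, add_zero, zero_add, neg_zero]
        abel
      · simp only [map_sub, map_neg, hSmEmp', hSmEm', hA3, hA4]
        abel
    · intro x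
      rw [h𝒢, Prod.ext_iff]
      constructor
      · simp only [map_sub, map_neg, hRmEmp, hRmEm, hC3, hC4]
        abel
      · simp only [map_sub, map_neg, hRmEmp, hRmEm, hC1, hC2, hB3, hB4, map_zero,
          sub_zero, zero_sub, add_zero, zero_add, neg_zero]
        abel
end

section
/- Let a Grushin problem for P : H → H with operators R₋ : H₋ → H, R₊ : H → H₊ be well posed with inverse blocks E, E₊, E₋, E₋₊. Let V₋, V₊ be complex Banach spaces and N₋ : V₋ → H₋, N₊ : H₊ → V₊ bounded operators such that the block operator (u₊, u₋) ↦ (E₋₊ u₊ + N₋ u₋, N₊ u₊) from H₊ × V₋ to H₋ × V₊ is bijective, with inverse blocks F : H₋ → H₊, F₊ : V₊ → H₊, F₋ : H₋ → V₋, F₋₊ : V₊ → V₋. Then the Grushin problem (u, u₋) ↦ (P u + R₋(N₋ u₋), N₊(R₊ u)) from H × V₋ to H × V₊ is well posed, with inverse blocks E − E₊ ∘ F ∘ E₋, E₊ ∘ F₊, F₋ ∘ E₋, and −F₋₊. -/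
/-- Iterated Grushin problems: if the Grushin problem for `P` with `R₋, R₊` is well
posed with blocks `E, E₊, E₋, E₋₊`, and the block problem
`(u₊, u₋) ↦ (E₋₊ u₊ + N₋ u₋, N₊ u₊)` is bijective with inverse blocks
`F, F₊, F₋, F₋₊`, then the Grushin problem `(u, u₋) ↦ (P u + R₋ N₋ u₋, N₊ R₊ u)` is
well posed with inverse blocks `E − E₊ F E₋`, `E₊ F₊`, `F₋ E₋`, `−F₋₊`. -/
theorem stmt_13
    {H Hm Hp Vm Vp : Type*}
    [NormedAddCommGroup H] [NormedSpace ℂ H] [CompleteSpace H]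
    [NormedAddCommGroup Hm] [NormedSpace ℂ Hm] [CompleteSpace Hm]
    [NormedAddCommGroup Hp] [NormedSpace ℂ Hp] [CompleteSpace Hp]
    [NormedAddCommGroup Vm] [NormedSpace ℂ Vm] [CompleteSpace Vm]
    [NormedAddCommGroup Vp] [NormedSpace ℂ Vp] [CompleteSpace Vp]
    (P : H →L[ℂ] H) (Rm : Hm →L[ℂ] H) (Rp : H →L[ℂ] Hp)
    (E : H →L[ℂ] H) (Ep : Hp →L[ℂ] H) (Em : H →L[ℂ] Hm) (Emp : Hp →L[ℂ] Hm)
    (hright : ∀ (v : H) (vp : Hp),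
      P (E v + Ep vp) + Rm (Em v + Emp vp) = v ∧ Rp (E v + Ep vp) = vp)
    (hleft : ∀ (u : H) (um : Hm),
      E (P u + Rm um) + Ep (Rp u) = u ∧ Em (P u + Rm um) + Emp (Rp u) = um)
    (Nm : Vm →L[ℂ] Hm) (Np : Hp →L[ℂ] Vp)
    (F : Hm →L[ℂ] Hp) (Fp : Vp →L[ℂ] Hp) (Fm : Hm →L[ℂ] Vm) (Fmp : Vp →L[ℂ] Vm)
    (hFright : ∀ (w : Hm) (wp : Vp),
      Emp (F w + Fp wp) + Nm (Fm w + Fmp wp) = w ∧ Np (F w + Fp wp) = wp)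
    (hFleft : ∀ (up : Hp) (um : Vm),
      F (Emp up + Nm um) + Fp (Np up) = up ∧ Fm (Emp up + Nm um) + Fmp (Np up) = um) :
    (∀ (v : H) (vp : Vp),
      P ((E v - Ep (F (Em v))) + Ep (Fp vp)) +
        Rm (Nm (Fm (Em v) - Fmp vp)) = v ∧
      Np (Rp ((E v - Ep (F (Em v))) + Ep (Fp vp))) = vp) ∧
    (∀ (u : H) (um : Vm),
      (E (P u + Rm (Nm um)) - Ep (F (Em (P u + Rm (Nm um))))) +
        Ep (Fp (Np (Rp u))) = u ∧
      Fm (Em (P u + Rm (Nm um))) - Fmp (Np (Rp u)) = um) := by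
  -- pointwise identities from the first Grushin problem
  have pE : ∀ v, P (E v) = v - Rm (Em v) := by
    intro v; have h := (hright v 0).1
    simp only [map_zero, add_zero] at h
    exact eq_sub_of_add_eq h
  have pEp : ∀ x, P (Ep x) = - Rm (Emp x) := by
    intro x; have h := (hright 0 x).1
    simp only [map_zero, zero_add] at h
    exact eq_neg_of_add_eq_zero_left h
  have rpE : ∀ v, Rp (E v) = (0 : Hp) := by
    intro v; have h := (hright v 0).2
    simpa using h
  have rpEp : ∀ x, Rp (Ep x) = x := by
    intro x; have h := (hright 0 x).2
    simpa using h
  -- pointwise identities from the second (block) problem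
  have nmFm : ∀ w, Nm (Fm w) = w - Emp (F w) := by
    intro w; have h := (hFright w 0).1
    simp only [map_zero, add_zero] at h
    exact eq_sub_of_add_eq (by rw [add_comm] at h; exact h)
  have nmFmp : ∀ wp, Nm (Fmp wp) = - Emp (Fp wp) := by
    intro wp; have h := (hFright 0 wp).1
    simp only [map_zero, zero_add] at h
    exact eq_neg_of_add_eq_zero_left (by rw [add_comm] at h; exact h)
  have npF : ∀ w, Np (F w) = (0 : Vp) := by
    intro w; have h := (hFright w 0).2
    simpa using h
  have npFp : ∀ wp, Np (Fp wp) = wp := by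
    intro wp; have h := (hFright 0 wp).2
    simpa using h
  have fEmp : ∀ up, F (Emp up) = up - Fp (Np up) := by
    intro up; have h := (hFleft up 0).1
    simp only [map_zero, add_zero] at h
    exact eq_sub_of_add_eq h
  have fNm : ∀ um, F (Nm um) = (0 : Hp) := by
    intro um; have h := (hFleft 0 um).1
    simpa using h
  have fmEmp : ∀ up, Fm (Emp up) = - Fmp (Np up) := by
    intro up; have h := (hFleft up 0).2
    simp only [map_zero, add_zero] at h
    exact eq_neg_of_add_eq_zero_left h
  have fmNm : ∀ um, Fm (Nm um) = um := by
    intro um; have h := (hFleft 0 um).2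
    simpa using h
  refine ⟨fun v vp => ⟨?_, ?_⟩, fun u um => ⟨?_, ?_⟩⟩
  · simp only [map_add, map_sub, nmFm, nmFmp, pE, pEp, map_neg, sub_neg_eq_add]
    abel
  · simp only [map_add, map_sub, rpE, rpEp, npF, npFp, zero_sub, map_neg, neg_add_cancel_left,
      zero_add, neg_zero]
  · have hE := (hleft u (Nm um)).1
    have hEm := (hleft u (Nm um)).2
    have hE' : E (P u + Rm (Nm um)) = u - Ep (Rp u) := eq_sub_of_add_eq hE
    have hEm' : Em (P u + Rm (Nm um)) = Nm um - Emp (Rp u) := eq_sub_of_add_eq hEm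
    rw [hE', hEm', map_sub F, fNm, fEmp, zero_sub, map_neg, map_sub]
    abel
  · have hEm := (hleft u (Nm um)).2
    have hEm' : Em (P u + Rm (Nm um)) = Nm um - Emp (Rp u) := eq_sub_of_add_eq hEm
    rw [hEm', map_sub Fm, fmNm, fmEmp]
    abel
end

section
/- Let H be a complex Hilbert space, {e_j}_{j=1}^N an orthonormal family, π the orthogonal projection onto its span, R₊ : H → ℂᴺ given by (R₊u)_j = ⟨u, e_j⟩ and R₋ = R₊*. Let T : H → H be a bounded operator with ‖(1 − π) T‖ < 1. Then the Grushin problem (u, u₋) ↦ ((1 − T) u + R₋ u₋, R₊ u) from H × ℂᴺ to H × ℂᴺ is well posed, and its effective Hamiltonian is given by the operator-norm convergent series E₋₊ = (R₊ ∘ T ∘ R₋ − 1) + Σ_{k=1}^∞ R₊ ∘ T ∘ ((1 − π) ∘ T)^k ∘ R₋. -/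
/-!
Since `R₊ R₋ = 1` and `R₋ R₊ = π`, splitting `1 - T = (1 - (1 - π) T) - π T` reduces the Grushin
problem to the invertibility of `1 - (1 - π) T`. Its inverse `S` is the Neumann series
`∑ ((1 - π) T)^k`, and the inverse of the Grushin operator can be written down in terms of `S`,
with `E₋₊ = R₊ T S R₋ - 1`. Splitting off the `k = 0` term of `S` gives the series.
-/

section OrthonormalFamily

variable {𝕜 H ι : Type*} [RCLike 𝕜] [NormedAddCommGroup H] [InnerProductSpace 𝕜 H] [Fintype ι]
  {e : ι → H} {Rp : H → ι → 𝕜} {Rm : (ι → 𝕜) → H}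

theorem Orthonormal.analysis_synthesis_apply (he : Orthonormal 𝕜 e)
    (hRp : ∀ u j, Rp u j = inner 𝕜 (e j) u) (hRm : ∀ c, Rm c = ∑ j, c j • e j) (c : ι → 𝕜) :
    Rp (Rm c) = c := by
  funext j
  rw [hRp, hRm]
  exact he.inner_right_fintype c j

theorem Orthonormal.synthesis_analysis_apply {π : H → H} (he : Orthonormal 𝕜 e)
    (hπ : ∀ u, π u ∈ Submodule.span 𝕜 (Set.range e) ∧
      u - π u ∈ (Submodule.span 𝕜 (Set.range e))ᗮ)
    (hRp : ∀ u j, Rp u j = inner 𝕜 (e j) u) (hRm : ∀ c, Rm c = ∑ j, c j • e j) (u : H) :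
    Rm (Rp u) = π u := by
  obtain ⟨c, hc⟩ : ∃ c, Rm c = π u := by
    simpa only [hRm] using (Submodule.mem_span_range_iff_exists_fun 𝕜).mp (hπ u).1
  have hRpπ : Rp u = Rp (π u) := by
    funext j
    have h := Submodule.inner_right_of_mem_orthogonal
      (Submodule.subset_span (Set.mem_range_self j)) (hπ u).2
    rw [inner_sub_right, sub_eq_zero] at h
    rw [hRp, hRp, h]
  rw [hRpπ, ← hc, he.analysis_synthesis_apply hRp hRm]

end OrthonormalFamily

/-- `(E, E₊; E₋, E₋₊)` is a two-sided inverse of the Grushin operator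
`(u, u₋) ↦ (P u + R₋ u₋, R₊ u)`. -/
def IsGrushinInverse {R M F : Type*} [Semiring R] [AddCommMonoid M] [Module R M]
    [TopologicalSpace M] [AddCommMonoid F] [Module R F] [TopologicalSpace F]
    (P : M →L[R] M) (Rm : F →L[R] M) (Rp : M →L[R] F)
    (E : M →L[R] M) (Ep : F →L[R] M) (Em : M →L[R] F) (Emp : F →L[R] F) : Prop :=
  (∀ v vp, P (E v + Ep vp) + Rm (Em v + Emp vp) = v ∧ Rp (E v + Ep vp) = vp) ∧
  (∀ u um, E (P u + Rm um) + Ep (Rp u) = u ∧ Em (P u + Rm um) + Emp (Rp u) = um)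

theorem isGrushinInverse_one_sub {R M F : Type*} [Ring R] [AddCommGroup M] [Module R M]
    [TopologicalSpace M] [IsTopologicalAddGroup M] [AddCommGroup F] [Module R F]
    [TopologicalSpace F] [IsTopologicalAddGroup F]
    {T π S : M →L[R] M} {Rp : M →L[R] F} {Rm : F →L[R] M}
    (hRpRm : ∀ c, Rp (Rm c) = c) (hRmRp : ∀ u, Rm (Rp u) = π u)
    (hS : S * (1 - (1 - π) * T) = 1) (hS' : (1 - (1 - π) * T) * S = 1) :
    IsGrushinInverse (1 - T) Rm Rp (S * (1 - π)) (S.comp Rm) (Rp + Rp.comp (T * S * (1 - π)))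
      (Rp.comp ((T * S).comp Rm) - 1) := by
  have hS_apply (u : M) : S u - (S (T u) - S (π (T u))) = u := by simpa using congr($hS u)
  have hS'_apply (u : M) : S u - (T (S u) - π (T (S u))) = u := by simpa using congr($hS' u)
  have hRpπ (u : M) : Rp (π u) = Rp u := by rw [← hRmRp, hRpRm]
  have hπRm (c : F) : π (Rm c) = Rm c := by rw [← hRmRp, hRpRm]
  have hRpS (u : M) : Rp (S u) = Rp u := by simpa [hRpπ] using congr(Rp $(hS'_apply u))
  simp only [IsGrushinInverse, mul_apply_eq_comp, ContinuousLinearMap.comp_apply, add_apply,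
    sub_apply, one_apply_eq_self, map_add, map_sub, hRmRp, hRpRm, hπRm, hRpS, hRpπ]
  refine ⟨fun v vp => ⟨?_, by abel⟩, fun u um => ⟨?_, ?_⟩⟩
  · linear_combination (norm := module) hS'_apply v - hS'_apply (π v) + hS'_apply (Rm vp)
  · linear_combination (norm := module) hS_apply u
  · have hRpTS := congr(Rp (T $(hS_apply u)))
    simp only [map_sub] at hRpTS
    linear_combination (norm := module) hRpTS

theorem hasSum_geom_series_succ {R : Type*} [NormedRing R] [HasSummableGeomSeries R] {x : R}
    (h : ‖x‖ < 1) : HasSum (fun n ↦ x ^ (n + 1)) (∑' n, x ^ n - 1) := by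
  rw [← geom_series_succ x h]
  exact ((summable_nat_add_iff (f := (x ^ ·)) 1).mpr (summable_geometric_of_norm_lt_one h)).hasSum

theorem HasSum.clm_comp_comp {𝕜 ι E F G K : Type*} [NontriviallyNormedField 𝕜]
    [SeminormedAddCommGroup E] [NormedSpace 𝕜 E] [SeminormedAddCommGroup F] [NormedSpace 𝕜 F]
    [SeminormedAddCommGroup G] [NormedSpace 𝕜 G] [SeminormedAddCommGroup K] [NormedSpace 𝕜 K]
    {f : ι → F →L[𝕜] G} {s : F →L[𝕜] G} (h : HasSum f s) (A : G →L[𝕜] K) (B : E →L[𝕜] F) :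
    HasSum (fun i ↦ A.comp ((f i).comp B)) (A.comp (s.comp B)) :=
  h.mapL ((ContinuousLinearMap.compL 𝕜 E G K A).comp ((ContinuousLinearMap.compL 𝕜 E F G).flip B))

/-- Grushin approximation scheme: with `π` the orthogonal projection onto the span of
an orthonormal family, `(R₊u)_j = ⟨u, e_j⟩`, `R₋ = R₊*`, and `‖(1 − π)T‖ < 1`, the
Grushin problem for `P = 1 − T` is well posed and its effective Hamiltonian is
`E₋₊ = (R₊ T R₋ − 1) + Σ_{k≥1} R₊ T ((1 − π) T)^k R₋` (norm convergent series). -/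
theorem stmt_15
    {H : Type*} [NormedAddCommGroup H] [InnerProductSpace ℂ H] [CompleteSpace H]
    {N : ℕ} (e : Fin N → H) (he : Orthonormal ℂ e)
    (π : H →L[ℂ] H)
    (hπ : ∀ u : H, π u ∈ Submodule.span ℂ (Set.range e) ∧
      u - π u ∈ (Submodule.span ℂ (Set.range e))ᗮ)
    (Rp : H →L[ℂ] (Fin N → ℂ)) (hRp : ∀ (u : H) (j : Fin N), Rp u j = inner ℂ (e j) u)
    (Rm : (Fin N → ℂ) →L[ℂ] H) (hRm : ∀ c : Fin N → ℂ, Rm c = ∑ j, c j • e j)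
    (T : H →L[ℂ] H)
    (hT : ‖(ContinuousLinearMap.id ℂ H - π).comp T‖ < 1) :
    ∃ (E : H →L[ℂ] H) (Ep : (Fin N → ℂ) →L[ℂ] H) (Em : H →L[ℂ] (Fin N → ℂ))
      (Emp : (Fin N → ℂ) →L[ℂ] (Fin N → ℂ)),
      (∀ (v : H) (vp : Fin N → ℂ),
        ((E v + Ep vp) - T (E v + Ep vp)) + Rm (Em v + Emp vp) = v ∧
        Rp (E v + Ep vp) = vp) ∧
      (∀ (u : H) (um : Fin N → ℂ),
        E ((u - T u) + Rm um) + Ep (Rp u) = u ∧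
        Em ((u - T u) + Rm um) + Emp (Rp u) = um) ∧
      Summable (fun k : ℕ =>
        Rp.comp (T.comp ((((ContinuousLinearMap.id ℂ H - π).comp T) ^ (k + 1)).comp
          Rm))) ∧
      Emp = (Rp.comp (T.comp Rm) - ContinuousLinearMap.id ℂ (Fin N → ℂ)) +
        ∑' k : ℕ,
          Rp.comp (T.comp ((((ContinuousLinearMap.id ℂ H - π).comp T) ^ (k + 1)).comp
            Rm)) := by
  set Q := (ContinuousLinearMap.id ℂ H - π).comp T
  have hGrushin := isGrushinInverse_one_sub (he.analysis_synthesis_apply hRp hRm)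
    (he.synthesis_analysis_apply hπ hRp hRm) (geom_series_mul_neg Q hT) (mul_neg_geom_series Q hT)
  have hSeries : HasSum (fun k ↦ Rp.comp (T.comp ((Q ^ (k + 1)).comp Rm)))
      (Rp.comp (T.comp ((∑' n, Q ^ n - 1).comp Rm))) :=
    (hasSum_geom_series_succ hT).clm_comp_comp (Rp.comp T) Rm
  refine ⟨_, _, _, _, hGrushin.1, hGrushin.2, hSeries.summable, ?_⟩
  rw [hSeries.tsum_eq]
  ext c
  simp
end

section
/- Let H be a complex Hilbert space, T : H → H a bounded operator, and {e_j}_{j=1}^N a pairwise orthogonal family with ⟨e_j, e_j⟩ = λ_j ≥ 0. Let δ ≥ 0, C > 0, ε > 0 and suppose that for every u ∈ H there exists t ∈ ℂᴺ with ‖T u − Σ_{j=1}^N t_j e_j‖ ≤ δ‖u‖ and ‖t‖_{ℓ²} ≤ C‖T u‖. Let π be the orthogonal projection onto the span of {e_j : λ_j > ε²/C²}. Then ‖(1 − π) T‖ ≤ δ + ε‖T‖. -/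
/-!
Let `s` be the set of indices with `λ_j > ε²/C²`. Given `u`, pick `t` as in the hypothesis and
split `Σ t_j e_j` into its `s`-part, which lies in the range of `π`, and the remaining part.
By orthogonality the remaining part has squared norm `Σ_{j ∉ s} |t_j|² λ_j ≤ (ε²/C²) ‖t‖² ≤
ε² ‖T u‖²`. Since `π (T u)` is the best approximation of `T u` in the range of `π`,
`‖T u - π (T u)‖ ≤ ‖T u - Σ_{j ∈ s} t_j e_j‖ ≤ δ ‖u‖ + ε ‖T u‖`.
-/

open Finset

section

variable {𝕜 E ι : Type*} [RCLike 𝕜] [NormedAddCommGroup E] [InnerProductSpace 𝕜 E]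

theorem norm_sum_smul_sq_of_pairwise_inner_eq_zero {e : ι → E}
    (he : Pairwise fun i j => inner 𝕜 (e i) (e j) = 0) (s : Finset ι) (t : ι → 𝕜) :
    ‖∑ j ∈ s, t j • e j‖ ^ 2 = ∑ j ∈ s, ‖t j‖ ^ 2 * ‖e j‖ ^ 2 := by
  have hinner : inner 𝕜 (∑ i ∈ s, t i • e i) (∑ j ∈ s, t j • e j)
      = ∑ i ∈ s, ((‖t i‖ ^ 2 * ‖e i‖ ^ 2 : ℝ) : 𝕜) := by
    rw [sum_inner]
    refine sum_congr rfl fun i hi => ?_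
    rw [inner_sum, sum_eq_single_of_mem i hi fun j _ hji => by
      rw [inner_smul_left, inner_smul_right, he hji.symm, mul_zero, mul_zero]]
    rw [inner_smul_left, inner_smul_right, inner_self_eq_norm_sq_to_K, ← mul_assoc,
      RCLike.conj_mul]
    push_cast
    ring
  have h := inner_self_eq_norm_sq_to_K (𝕜 := 𝕜) (∑ j ∈ s, t j • e j)
  rw [hinner] at h
  exact_mod_cast h.symm

theorem norm_sum_smul_sq_le_of_pairwise_inner_eq_zero {e : ι → E}
    (he : Pairwise fun i j => inner 𝕜 (e i) (e j) = 0) {s : Finset ι} {θ : ℝ}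
    (hθ : ∀ j ∈ s, ‖e j‖ ^ 2 ≤ θ) (t : ι → 𝕜) :
    ‖∑ j ∈ s, t j • e j‖ ^ 2 ≤ θ * ∑ j ∈ s, ‖t j‖ ^ 2 := by
  rw [norm_sum_smul_sq_of_pairwise_inner_eq_zero he, mul_sum]
  exact sum_le_sum fun j hj => by
    rw [mul_comm θ]
    exact mul_le_mul_of_nonneg_left (hθ j hj) (by positivity)

theorem norm_sub_le_norm_sub_of_sub_mem_orthogonal {K : Submodule 𝕜 E} {x p w : E}
    (hp : p ∈ K) (hxp : x - p ∈ Kᗮ) (hw : w ∈ K) : ‖x - p‖ ≤ ‖x - w‖ := by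
  have hpyth := norm_add_sq_eq_norm_sq_add_norm_sq_of_inner_eq_zero (x - p) (p - w)
    ((K.mem_orthogonal' _).mp hxp _ (K.sub_mem hp hw))
  rw [sub_add_sub_cancel] at hpyth
  nlinarith [norm_nonneg (p - w), norm_nonneg (x - w), norm_nonneg (x - p)]

end

theorem stmt_16_general
    {H : Type*} [NormedAddCommGroup H] [InnerProductSpace ℂ H]
    {N : ℕ} (e : Fin N → H) (lam : Fin N → ℝ)
    (horth : ∀ i j, i ≠ j → (inner ℂ (e i) (e j) : ℂ) = 0)
    (hnorm : ∀ j, (inner ℂ (e j) (e j) : ℂ) = (lam j : ℂ))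
    (T : H →L[ℂ] H)
    (δ C ε : ℝ) (hδ : 0 ≤ δ) (hC : 0 < C) (hε : 0 < ε)
    (happrox : ∀ u : H, ∃ t : Fin N → ℂ,
      ‖T u - ∑ j, t j • e j‖ ≤ δ * ‖u‖ ∧
      Real.sqrt (∑ j, ‖t j‖ ^ 2) ≤ C * ‖T u‖)
    (π : H →L[ℂ] H)
    (hπ : ∀ u : H,
      π u ∈ Submodule.span ℂ (e '' {j | ε ^ 2 / C ^ 2 < lam j}) ∧
      u - π u ∈ (Submodule.span ℂ (e '' {j | ε ^ 2 / C ^ 2 < lam j}))ᗮ) :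
    ‖(ContinuousLinearMap.id ℂ H - π).comp T‖ ≤ δ + ε * ‖T‖ := by
  have hlam : ∀ j, ‖e j‖ ^ 2 = lam j := fun j => by
    rw [← inner_self_eq_norm_sq (𝕜 := ℂ), hnorm, RCLike.re_to_complex, Complex.ofReal_re]
  refine ContinuousLinearMap.opNorm_le_bound _ (by positivity) fun u => ?_
  obtain ⟨t, hTu, ht⟩ := happrox u
  set s := univ.filter fun j => ε ^ 2 / C ^ 2 < lam j
  have hmem : ∑ j ∈ s, t j • e j ∈ Submodule.span ℂ (e '' {j | ε ^ 2 / C ^ 2 < lam j}) :=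
    Submodule.sum_smul_mem _ t fun j hj =>
      Submodule.subset_span (Set.mem_image_of_mem e (by simpa [s] using hj))
  have htail : ‖∑ j ∈ sᶜ, t j • e j‖ ≤ ε * ‖T u‖ := by
    have hsmall : ∀ j ∈ sᶜ, ‖e j‖ ^ 2 ≤ ε ^ 2 / C ^ 2 := fun j hj => by
      simpa [s, hlam] using hj
    have ht' : ∑ j, ‖t j‖ ^ 2 ≤ (C * ‖T u‖) ^ 2 := (Real.sqrt_le_iff.mp ht).2
    refine (pow_le_pow_iff_left₀ (norm_nonneg _) (by positivity) two_ne_zero).mp ?_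
    calc ‖∑ j ∈ sᶜ, t j • e j‖ ^ 2 ≤ ε ^ 2 / C ^ 2 * ∑ j ∈ sᶜ, ‖t j‖ ^ 2 :=
          norm_sum_smul_sq_le_of_pairwise_inner_eq_zero (fun i j => horth i j) hsmall t
      _ ≤ ε ^ 2 / C ^ 2 * (C * ‖T u‖) ^ 2 := by
          gcongr
          refine (sum_le_sum_of_subset_of_nonneg (subset_univ _) fun j _ _ => ?_).trans ht'
          positivity
      _ = (ε * ‖T u‖) ^ 2 := by field_simp
  calc ‖((ContinuousLinearMap.id ℂ H - π).comp T) u‖ = ‖T u - π (T u)‖ := rfl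
    _ ≤ ‖T u - ∑ j ∈ s, t j • e j‖ :=
        norm_sub_le_norm_sub_of_sub_mem_orthogonal (hπ (T u)).1 (hπ (T u)).2 hmem
    _ = ‖(T u - ∑ j, t j • e j) + ∑ j ∈ sᶜ, t j • e j‖ := by
        rw [← sum_add_sum_compl s, sub_add_eq_sub_sub, sub_add_cancel]
    _ ≤ δ * ‖u‖ + ε * ‖T u‖ := (norm_add_le _ _).trans (add_le_add hTu htail)
    _ ≤ (δ + ε * ‖T‖) * ‖u‖ := by nlinarith [T.le_opNorm u]

/-- Approximation lemma: if every `T u` is `δ‖u‖`-approximated by combinations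
`Σ t_j e_j` of a pairwise orthogonal family with `⟨e_j, e_j⟩ = λ_j` and
`‖t‖_{ℓ²} ≤ C‖T u‖`, and `π` is the orthogonal projection onto the span of those
`e_j` with `λ_j > ε²/C²`, then `‖(1 − π) T‖ ≤ δ + ε‖T‖`. -/
theorem stmt_16
    {H : Type*} [NormedAddCommGroup H] [InnerProductSpace ℂ H] [CompleteSpace H]
    {N : ℕ} (e : Fin N → H) (lam : Fin N → ℝ)
    (horth : ∀ i j, i ≠ j → (inner ℂ (e i) (e j) : ℂ) = 0)
    (hnorm : ∀ j, (inner ℂ (e j) (e j) : ℂ) = (lam j : ℂ))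
    (hlam : ∀ j, 0 ≤ lam j)
    (T : H →L[ℂ] H)
    (δ C ε : ℝ) (hδ : 0 ≤ δ) (hC : 0 < C) (hε : 0 < ε)
    (happrox : ∀ u : H, ∃ t : Fin N → ℂ,
      ‖T u - ∑ j, t j • e j‖ ≤ δ * ‖u‖ ∧
      Real.sqrt (∑ j, ‖t j‖ ^ 2) ≤ C * ‖T u‖)
    (π : H →L[ℂ] H)
    (hπ : ∀ u : H,
      π u ∈ Submodule.span ℂ (e '' {j | ε ^ 2 / C ^ 2 < lam j}) ∧
      u - π u ∈ (Submodule.span ℂ (e '' {j | ε ^ 2 / C ^ 2 < lam j}))ᗮ) :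
    ‖(ContinuousLinearMap.id ℂ H - π).comp T‖ ≤ δ + ε * ‖T‖ :=
  stmt_16_general e lam horth hnorm T δ C ε hδ hC hε happrox π hπ
end

section
/- Let ℋ be a complex Hilbert space. For each h ∈ (0,1] let P(h) : ℋ → ℋ be a bounded operator and let π₊(h), π₋(h) be orthogonal projections on ℋ. Assume there exist M > 0 and functions a, b : (0,1] → [0,∞) with a(h)/h → 0 and b(h)/h → 0 as h → 0, such that for all h: ‖P(h)* π₋(h)‖ ≤ M h, ‖P(h) π₊(h)‖ ≤ M h, ‖π₋(h) P(h) (1 − π₊(h))‖ ≤ a(h), ‖π₊(h) P(h)* (1 − π₋(h))‖ ≤ b(h), and for all u ∈ ℋ: ‖P(h)(1 − π₊(h))u‖ ≥ h‖(1 − π₊(h))u‖ and ‖P(h)*(1 − π₋(h))u‖ ≥ h‖(1 − π₋(h))u‖. Then there exist h₀ > 0 and C > 0 such that for all 0 < h < h₀ the Grushin problem 𝒫(h) : ℋ × range π₋(h) → ℋ × range π₊(h), 𝒫(h)(u, u₋) = (P(h) u + u₋, π₊(h) u), is bijective, and whenever 𝒫(h)(u, u₋) = (v, v₊) one has h‖u‖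 + ‖u₋‖ ≤ C(‖v‖ + h‖v₊‖). -/
/-!
On `ker π₊` the hypotheses give `‖(1 - π₋) P x‖ ≥ ‖P x‖ - ‖π₋ P x‖ ≥ (h - a) ‖x‖ ≥ h ‖x‖ / 2` as
soon as `a ≤ h / 2`, and symmetrically `‖(1 - π₊) P* z‖ ≥ h ‖z‖ / 2` on `ker π₋`. Hence the
compression `(1 - π₋) P : ker π₊ → ker π₋` is bounded below and its adjoint `(1 - π₊) P*` is
injective, so it is bijective: its range is closed with trivial orthogonal complement. The
Grushin problem `𝒫(u, u₋) = (v, v₊)` is then solved by `u = v₊ + x`, `u₋ = π₋ (v - P u)`, where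
`x ∈ ker π₊` solves `(1 - π₋) P x = (1 - π₋) (v - P v₊)`. The same lower bound, combined with
`‖P π₊‖ ≤ M h`, gives the a priori estimate.
-/

open ContinuousLinearMap Filter
open scoped InnerProduct Topology

section Module

variable {R E : Type*} [Semiring R] [AddCommMonoid E] [Module R E] [TopologicalSpace E]

theorem IsIdempotentElem.apply_apply {q : E →L[R] E} (hq : IsIdempotentElem q) (x : E) :
    q (q x) = q x :=
  DFunLike.congr_fun hq x

theorem IsIdempotentElem.apply_of_mem_range {q : E →L[R] E} (hq : IsIdempotentElem q)
    (x : LinearMap.range (q : E →ₗ[R] E)) : q x = x := by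
  obtain ⟨y, hy⟩ := x.2
  rw [← hy]
  exact hq.apply_apply y

def grushinProblem (T p q : E →L[R] E) :
    E × LinearMap.range (q : E →ₗ[R] E) →ₗ[R] E × LinearMap.range (p : E →ₗ[R] E) :=
  ((T : E →ₗ[R] E) ∘ₗ LinearMap.fst R _ _ +
      (LinearMap.range (q : E →ₗ[R] E)).subtype ∘ₗ LinearMap.snd R _ _).prod
    ((p : E →ₗ[R] E).rangeRestrict ∘ₗ LinearMap.fst R _ _)

@[simp]
theorem grushinProblem_apply (T p q : E →L[R] E) (x : E × LinearMap.range (q : E →ₗ[R] E)) :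
    grushinProblem T p q x = (T x.1 + x.2, ⟨p x.1, LinearMap.mem_range_self _ _⟩) :=
  rfl

end Module

section Normed

variable {𝕜 E : Type*} [NontriviallyNormedField 𝕜] [NormedAddCommGroup E] [NormedSpace 𝕜 E]
  {T p q : E →L[𝕜] E} {h a : ℝ}

theorem norm_apply_apply_le_of_apply_eq_zero
    (hqT : ‖q ∘L (T ∘L (ContinuousLinearMap.id 𝕜 E - p))‖ ≤ a) {x : E} (hx : p x = 0) :
    ‖q (T x)‖ ≤ a * ‖x‖ := by
  simpa [hx] using le_of_opNorm_le _ hqT x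

theorem sub_mul_norm_le_norm_sub_apply (hT : ∀ u, h * ‖u - p u‖ ≤ ‖T (u - p u)‖)
    (hqT : ‖q ∘L (T ∘L (ContinuousLinearMap.id 𝕜 E - p))‖ ≤ a) {x : E} (hx : p x = 0) :
    (h - a) * ‖x‖ ≤ ‖T x - q (T x)‖ := by
  have hTx : h * ‖x‖ ≤ ‖T x‖ := by simpa [hx] using hT x
  have hqTx := norm_apply_apply_le_of_apply_eq_zero hqT hx
  have := norm_sub_norm_le (T x) (q (T x))
  linarith

theorem grushinProblem_injective (hq : IsIdempotentElem q) (hh : 0 < h)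
    (hT : ∀ u, h * ‖u - p u‖ ≤ ‖T (u - p u)‖)
    (hqT : ‖q ∘L (T ∘L (ContinuousLinearMap.id 𝕜 E - p))‖ ≤ h / 2) :
    Function.Injective (grushinProblem T p q) := by
  refine (injective_iff_map_eq_zero _).mpr fun ⟨u, um⟩ hu ↦ ?_
  simp only [grushinProblem_apply, Prod.mk_eq_zero, Submodule.mk_eq_zero] at hu
  obtain ⟨hv, hpu⟩ := hu
  have hTu : T u = -um := eq_neg_of_add_eq_zero_left hv
  have hbound := sub_mul_norm_le_norm_sub_apply hT hqT hpu
  rw [hTu, map_neg, hq.apply_of_mem_range, sub_neg_eq_add, neg_add_cancel, norm_zero] at hbound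
  have hu0 : u = 0 := norm_le_zero_iff.mp (by nlinarith [norm_nonneg u])
  rw [hu0, map_zero, zero_eq_neg] at hTu
  exact Prod.ext hu0 (Subtype.ext hTu)

end Normed

section Hilbert

variable {𝕜 E F : Type*} [RCLike 𝕜]
  [NormedAddCommGroup E] [InnerProductSpace 𝕜 E] [CompleteSpace E]
  [NormedAddCommGroup F] [InnerProductSpace 𝕜 F] [CompleteSpace F]

theorem IsStarProjection.norm_apply_le {p : E →L[𝕜] E} (hp : IsStarProjection p) (x : E) :
    ‖p x‖ ≤ ‖x‖ :=
  (p.le_opNorm x).trans (mul_le_of_le_one_left (norm_nonneg x) (hp.norm_le p))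

theorem IsStarProjection.norm_sub_apply_le {p : E →L[𝕜] E} (hp : IsStarProjection p) (x : E) :
    ‖x - p x‖ ≤ ‖x‖ :=
  hp.one_sub.norm_apply_le x

theorem IsStarProjection.starProjection_ker {p : E →L[𝕜] E} (hp : IsStarProjection p)
    [p.ker.HasOrthogonalProjection] :
    p.ker.starProjection = 1 - p := by
  refine isStarProjection_starProjection.ext hp.one_sub ?_
  rw [Submodule.range_starProjection,
    LinearMap.IsIdempotentElem.ker_eq_range_one_sub hp.isIdempotentElem.toLinearMap]
  rfl

theorem ContinuousLinearMap.surjective_of_antilipschitz_of_injective_adjoint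
    (S : E →L[𝕜] F) {c : NNReal} (hS : AntilipschitzWith c S) (hS' : Function.Injective (S†)) :
    Function.Surjective S := by
  have : CompleteSpace S.range :=
    (show IsClosed (S.range : Set F) from hS.isClosed_range S.uniformContinuous).completeSpace_coe
  refine LinearMap.range_eq_top.mp ?_
  rw [← Submodule.orthogonal_eq_bot_iff, S.orthogonal_range]
  exact LinearMap.ker_eq_bot.mpr hS'

theorem Submodule.exists_mem_starProjection_apply_eq {K L : Submodule 𝕜 E}
    [CompleteSpace K] [CompleteSpace L] (T : E →L[𝕜] E) {c : ℝ} (hc : 0 < c)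
    (hK : ∀ x ∈ K, c * ‖x‖ ≤ ‖L.starProjection (T x)‖)
    (hL : ∀ z ∈ L, K.starProjection ((T†) z) = 0 → z = 0) {w : E} (hw : w ∈ L) :
    ∃ x ∈ K, L.starProjection (T x) = w := by
  set S : K →L[𝕜] L := L.orthogonalProjectionOnto ∘L T ∘L K.subtypeL
  have hS : AntilipschitzWith ⟨c⁻¹, by positivity⟩ S :=
    S.antilipschitz_of_bound fun x ↦ (le_inv_mul_iff₀ hc).mpr (hK x x.2)
  have hS' : Function.Injective (S†) := by
    refine (injective_iff_map_eq_zero _).mpr fun z hz ↦ ?_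
    simp only [S, adjoint_comp, K.adjoint_subtypeL, L.adjoint_orthogonalProjectionOnto] at hz
    exact Subtype.ext (hL z z.2 (congrArg Subtype.val hz))
  obtain ⟨x, hx⟩ := S.surjective_of_antilipschitz_of_injective_adjoint hS hS' ⟨w, hw⟩
  exact ⟨x, x.2, congrArg Subtype.val hx⟩

variable {T p q : E →L[𝕜] E} {h : ℝ}

theorem grushinProblem_surjective (hp : IsStarProjection p) (hq : IsStarProjection q)
    (hh : 0 < h) (hT : ∀ u, h * ‖u - p u‖ ≤ ‖T (u - p u)‖)
    (hqT : ‖q ∘L (T ∘L (ContinuousLinearMap.id 𝕜 E - p))‖ ≤ h / 2)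
    (hT' : ∀ u, h * ‖u - q u‖ ≤ ‖(T†) (u - q u)‖)
    (hpT : ‖p ∘L ((T†) ∘L (ContinuousLinearMap.id 𝕜 E - q))‖ ≤ h / 2) :
    Function.Surjective (grushinProblem T p q) := by
  have : CompleteSpace p.ker := p.isClosed_ker.completeSpace_coe
  have : CompleteSpace q.ker := q.isClosed_ker.completeSpace_coe
  have hbelow : ∀ x ∈ p.ker, (h - h / 2) * ‖x‖ ≤ ‖q.ker.starProjection (T x)‖ := fun x hx ↦ by
    simpa [hq.starProjection_ker] using sub_mul_norm_le_norm_sub_apply hT hqT hx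
  have hinj : ∀ z ∈ q.ker, p.ker.starProjection ((T†) z) = 0 → z = 0 := fun z hz hTz ↦ by
    have hbound := sub_mul_norm_le_norm_sub_apply hT' hpT hz
    rw [hp.starProjection_ker, sub_apply, one_apply_eq_self] at hTz
    rw [hTz, norm_zero] at hbound
    exact norm_le_zero_iff.mp (by nlinarith [norm_nonneg z])
  rintro ⟨v, w⟩
  obtain ⟨x, hx, hTx⟩ := Submodule.exists_mem_starProjection_apply_eq T (by linarith) hbelow hinj
    (w := (v - T w) - q (v - T w)) (by simp [hq.isIdempotentElem.apply_apply])
  refine ⟨(w + x, ⟨q (v - T (w + x)), LinearMap.mem_range_self _ _⟩), Prod.ext ?_ ?_⟩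
  · rw [hq.starProjection_ker, sub_apply, one_apply_eq_self, map_sub] at hTx
    simp only [grushinProblem_apply, map_add, map_sub]
    linear_combination (norm := module) hTx
  · have hx0 : p x = 0 := hx
    simp [hx0, hp.isIdempotentElem.apply_of_mem_range]

theorem grushinProblem_bijective (hp : IsStarProjection p) (hq : IsStarProjection q)
    (hh : 0 < h) (hT : ∀ u, h * ‖u - p u‖ ≤ ‖T (u - p u)‖)
    (hqT : ‖q ∘L (T ∘L (ContinuousLinearMap.id 𝕜 E - p))‖ ≤ h / 2)
    (hT' : ∀ u, h * ‖u - q u‖ ≤ ‖(T†) (u - q u)‖)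
    (hpT : ‖p ∘L ((T†) ∘L (ContinuousLinearMap.id 𝕜 E - q))‖ ≤ h / 2) :
    Function.Bijective (grushinProblem T p q) :=
  ⟨grushinProblem_injective hq.isIdempotentElem hh hT hqT,
    grushinProblem_surjective hp hq hh hT hqT hT' hpT⟩

theorem grushinProblem_estimate {M : ℝ} (hM : 0 ≤ M) (hh : 0 < h) (hp : IsIdempotentElem p)
    (hq : IsStarProjection q) (hTp : ‖T ∘L p‖ ≤ M * h)
    (hT : ∀ u, h * ‖u - p u‖ ≤ ‖T (u - p u)‖)
    (hqT : ‖q ∘L (T ∘L (ContinuousLinearMap.id 𝕜 E - p))‖ ≤ h / 2)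
    (u : E) (um : LinearMap.range (q : E →ₗ[𝕜] E)) :
    h * ‖u‖ + ‖(um : E)‖ ≤ (4 * M + 4) * (‖T u + um‖ + h * ‖p u‖) := by
  set v := T u + um
  set y := u - p u
  have hy : p y = 0 := by simp [y, hp.apply_apply]
  have hum : q um = um := hq.isIdempotentElem.apply_of_mem_range um
  have hTpu : ‖T (p u)‖ ≤ M * h * ‖p u‖ := by
    simpa [hp.apply_apply] using le_of_opNorm_le _ hTp (p u)
  have hTy : T y - q (T y) = (v - T (p u)) - q (v - T (p u)) := by
    simp only [y, v, map_sub, map_add, hum]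
    abel
  have hum_eq : (um : E) = q v - q (T (p u)) - q (T y) := by
    simp only [y, v, map_sub, map_add, hum]
    abel
  have hy_le : (h - h / 2) * ‖y‖ ≤ ‖v‖ + M * h * ‖p u‖ := by
    refine (sub_mul_norm_le_norm_sub_apply hT hqT hy).trans ?_
    rw [hTy]
    exact (hq.norm_sub_apply_le _).trans ((norm_sub_le _ _).trans (by linarith))
  have hum_le : ‖(um : E)‖ ≤ ‖v‖ + M * h * ‖p u‖ + h / 2 * ‖y‖ := by
    rw [hum_eq]
    exact (norm_sub_le _ _).trans (add_le_add ((norm_sub_le _ _).trans (add_le_add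
      (hq.norm_apply_le v) ((hq.norm_apply_le _).trans hTpu)))
      (norm_apply_apply_le_of_apply_eq_zero hqT hy))
  have hu_le : h * ‖u‖ ≤ h * ‖p u‖ + h * ‖y‖ := by
    rw [← mul_add]
    exact mul_le_mul_of_nonneg_left (norm_le_norm_add_norm_sub' u (p u)) hh.le
  nlinarith [mul_nonneg hM (norm_nonneg v), mul_nonneg hh.le (norm_nonneg (p u))]

end Hilbert

theorem Filter.Tendsto.eventually_le_mul_of_div {f : ℝ → ℝ}
    (hf : Tendsto (fun h ↦ f h / h) (𝓝[>] 0) (𝓝 0)) {ε : ℝ} (hε : 0 < ε) :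
    ∀ᶠ h in 𝓝[>] 0, f h ≤ ε * h := by
  filter_upwards [hf (Iio_mem_nhds hε), self_mem_nhdsWithin] with h hlt hpos
  exact (div_le_iff₀ hpos).mp hlt.le

theorem stmt_17_general
    {ℋ : Type*} [NormedAddCommGroup ℋ] [InnerProductSpace ℂ ℋ] [CompleteSpace ℋ]
    (P πp πm : ℝ → ℋ →L[ℂ] ℋ)
    (hπp : ∀ h ∈ Set.Ioc (0 : ℝ) 1, IsIdempotentElem (πp h) ∧ IsSelfAdjoint (πp h))
    (hπm : ∀ h ∈ Set.Ioc (0 : ℝ) 1, IsIdempotentElem (πm h) ∧ IsSelfAdjoint (πm h))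
    (M : ℝ) (hM : 0 < M)
    (a b : ℝ → ℝ)
    (ha : Filter.Tendsto (fun h => a h / h) (nhdsWithin 0 (Set.Ioi 0)) (nhds 0))
    (hb : Filter.Tendsto (fun h => b h / h) (nhdsWithin 0 (Set.Ioi 0)) (nhds 0))
    (h2 : ∀ h ∈ Set.Ioc (0 : ℝ) 1, ‖(P h).comp (πp h)‖ ≤ M * h)
    (h3 : ∀ h ∈ Set.Ioc (0 : ℝ) 1,
      ‖(πm h).comp ((P h).comp (ContinuousLinearMap.id ℂ ℋ - πp h))‖ ≤ a h)
    (h4 : ∀ h ∈ Set.Ioc (0 : ℝ) 1,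
      ‖(πp h).comp ((ContinuousLinearMap.adjoint (P h)).comp
        (ContinuousLinearMap.id ℂ ℋ - πm h))‖ ≤ b h)
    (h5 : ∀ h ∈ Set.Ioc (0 : ℝ) 1, ∀ u : ℋ,
      h * ‖u - πp h u‖ ≤ ‖P h (u - πp h u)‖)
    (h6 : ∀ h ∈ Set.Ioc (0 : ℝ) 1, ∀ u : ℋ,
      h * ‖u - πm h u‖ ≤ ‖ContinuousLinearMap.adjoint (P h) (u - πm h u)‖) :
    ∃ h₀ > (0 : ℝ), ∃ C > (0 : ℝ), ∀ h ∈ Set.Ioc (0 : ℝ) 1, h < h₀ →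
      Function.Bijective (fun p : ℋ × ↥(LinearMap.range (πm h : ℋ →ₗ[ℂ] ℋ)) =>
        ((P h p.1 + (p.2 : ℋ),
          ⟨πp h p.1, LinearMap.mem_range.mpr ⟨p.1, rfl⟩⟩) :
          ℋ × ↥(LinearMap.range (πp h : ℋ →ₗ[ℂ] ℋ)))) ∧
      ∀ (u : ℋ) (um : ↥(LinearMap.range (πm h : ℋ →ₗ[ℂ] ℋ))),
        h * ‖u‖ + ‖(um : ℋ)‖ ≤ C * (‖P h u + (um : ℋ)‖ + h * ‖πp h u‖) := by
  obtain ⟨h₀, hh₀, hsmall⟩ := mem_nhdsGT_iff_exists_Ioo_subset.mp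
    ((ha.eventually_le_mul_of_div (half_pos one_pos)).and
      (hb.eventually_le_mul_of_div (half_pos one_pos)))
  refine ⟨h₀, hh₀, 4 * M + 4, by linarith, fun h hh hlt ↦ ?_⟩
  obtain ⟨hah, hbh⟩ := hsmall ⟨hh.1, hlt⟩
  have hp : IsStarProjection (πp h) := ⟨(hπp h hh).1, (hπp h hh).2⟩
  have hq : IsStarProjection (πm h) := ⟨(hπm h hh).1, (hπm h hh).2⟩
  have hqT := (h3 h hh).trans (hah.trans_eq (one_div_mul_eq_div 2 h))
  have hpT := (h4 h hh).trans (hbh.trans_eq (one_div_mul_eq_div 2 h))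
  exact ⟨grushinProblem_bijective hp hq hh.1 (h5 h hh) hqT (h6 h hh) hpT,
    grushinProblem_estimate hM.le hh.1 hp.isIdempotentElem hq (h2 h hh) (h5 h hh) hqT⟩

/-- A typical parameter-dependent Grushin estimate: under the assumptions
`‖P*π₋‖, ‖Pπ₊‖ = O(h)`, `‖π₋P(1−π₊)‖ = o(h)`, `‖π₊P*(1−π₋)‖ = o(h)`,
`‖P(1−π₊)u‖ ≥ h‖(1−π₊)u‖`, `‖P*(1−π₋)u‖ ≥ h‖(1−π₋)u‖`, for small `h` the Grushin
problem `𝒫(h)(u, u₋) = (P(h)u + u₋, π₊(h)u)` on `ℋ × range π₋(h) → ℋ × range π₊(h)`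
is well posed, with estimate `h‖u‖ + ‖u₋‖ ≤ C(‖v‖ + h‖v₊‖)`. -/
theorem stmt_17
    {ℋ : Type*} [NormedAddCommGroup ℋ] [InnerProductSpace ℂ ℋ] [CompleteSpace ℋ]
    (P πp πm : ℝ → ℋ →L[ℂ] ℋ)
    (hπp : ∀ h ∈ Set.Ioc (0 : ℝ) 1, IsIdempotentElem (πp h) ∧ IsSelfAdjoint (πp h))
    (hπm : ∀ h ∈ Set.Ioc (0 : ℝ) 1, IsIdempotentElem (πm h) ∧ IsSelfAdjoint (πm h))
    (M : ℝ) (hM : 0 < M)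
    (a b : ℝ → ℝ) (ha0 : ∀ h, 0 ≤ a h) (hb0 : ∀ h, 0 ≤ b h)
    (ha : Filter.Tendsto (fun h => a h / h) (nhdsWithin 0 (Set.Ioi 0)) (nhds 0))
    (hb : Filter.Tendsto (fun h => b h / h) (nhdsWithin 0 (Set.Ioi 0)) (nhds 0))
    (h1 : ∀ h ∈ Set.Ioc (0 : ℝ) 1,
      ‖(ContinuousLinearMap.adjoint (P h)).comp (πm h)‖ ≤ M * h)
    (h2 : ∀ h ∈ Set.Ioc (0 : ℝ) 1, ‖(P h).comp (πp h)‖ ≤ M * h)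
    (h3 : ∀ h ∈ Set.Ioc (0 : ℝ) 1,
      ‖(πm h).comp ((P h).comp (ContinuousLinearMap.id ℂ ℋ - πp h))‖ ≤ a h)
    (h4 : ∀ h ∈ Set.Ioc (0 : ℝ) 1,
      ‖(πp h).comp ((ContinuousLinearMap.adjoint (P h)).comp
        (ContinuousLinearMap.id ℂ ℋ - πm h))‖ ≤ b h)
    (h5 : ∀ h ∈ Set.Ioc (0 : ℝ) 1, ∀ u : ℋ,
      h * ‖u - πp h u‖ ≤ ‖P h (u - πp h u)‖)
    (h6 : ∀ h ∈ Set.Ioc (0 : ℝ) 1, ∀ u : ℋ,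
      h * ‖u - πm h u‖ ≤ ‖ContinuousLinearMap.adjoint (P h) (u - πm h u)‖) :
    ∃ h₀ > (0 : ℝ), ∃ C > (0 : ℝ), ∀ h ∈ Set.Ioc (0 : ℝ) 1, h < h₀ →
      Function.Bijective (fun p : ℋ × ↥(LinearMap.range (πm h : ℋ →ₗ[ℂ] ℋ)) =>
        ((P h p.1 + (p.2 : ℋ),
          ⟨πp h p.1, LinearMap.mem_range.mpr ⟨p.1, rfl⟩⟩) :
          ℋ × ↥(LinearMap.range (πp h : ℋ →ₗ[ℂ] ℋ)))) ∧
      ∀ (u : ℋ) (um : ↥(LinearMap.range (πm h : ℋ →ₗ[ℂ] ℋ))),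
        h * ‖u‖ + ‖(um : ℋ)‖ ≤ C * (‖P h u + (um : ℋ)‖ + h * ‖πp h u‖) :=
  stmt_17_general P πp πm hπp hπm M hM a b ha hb h2 h3 h4 h5 h6
end

section
/- Let H₁, H₂, H₋, H₊ be complex Banach spaces, I ⊆ ℝ an open interval, and for t ∈ I let P(t) : H₁ → H₂, R₋(t) : H₋ → H₂, R₊(t) : H₁ → H₊ be bounded operators depending on t, each differentiable (in operator norm) at t₀ ∈ I. Suppose that for each t ∈ I the Grushin problem 𝒫(t)(u, u₋) = (P(t) u + R₋(t) u₋, R₊(t) u) is well posed, and that the inverse blocks E(t), E₊(t), E₋(t), E₋₊(t) are each differentiable at t₀. Then, with ′ denoting the derivative at t₀ and suppressing the argument t₀, one has E₋ ∘ P′ ∘ E₊ = −E₋₊′ − E₋ ∘ R₋′ ∘ E₋₊ − E₋₊ ∘ R₊′ ∘ E₊. -/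
/-!
Well-posedness says that the second row `ℓ = (E₋, E₋₊)` of the inverse satisfies `ℓ(t) 𝒫(t) = π₂`
(the second projection) for all `t`, and that the second column `r = (E₊, E₋₊)` satisfies
`𝒫 r = ι₂` (the second inclusion) at `t₀`. Differentiating the constant `ℓ 𝒫` gives
`ℓ′ 𝒫 + ℓ 𝒫′ = 0`; composing on the right with `r` yields `ℓ 𝒫′ r = -ℓ′ ι₂ = -E₋₊′`, and expanding `ℓ 𝒫′ r` in blocks is the claimed identity.
-/

open Filter Topology ContinuousLinearMap

section

variable {X Y Z W : Type*}
  [NormedAddCommGroup X] [NormedSpace ℂ X] [NormedAddCommGroup Y] [NormedSpace ℂ Y]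
  [NormedAddCommGroup Z] [NormedSpace ℂ Z] [NormedAddCommGroup W] [NormedSpace ℂ W]

-- `HasDerivAt.clm_comp` only allows a parameter ranging over the scalar field of the operators.
theorem HasDerivAt.complexCLM_comp {c : ℝ → Y →L[ℂ] Z} {c' : Y →L[ℂ] Z}
    {d : ℝ → X →L[ℂ] Y} {d' : X →L[ℂ] Y} {t₀ : ℝ}
    (hc : HasDerivAt c c' t₀) (hd : HasDerivAt d d' t₀) :
    HasDerivAt (fun t => (c t).comp (d t)) (c'.comp (d t₀) + (c t₀).comp d') t₀ := by
  simpa [add_comm] using ((compL ℂ X Y Z).bilinearRestrictScalars ℝ).hasDerivAt_of_bilinear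
    (fun _ => hc) (fun _ => hd)

theorem HasDerivAt.clm_coprod {c : ℝ → X →L[ℂ] Z} {d : ℝ → Y →L[ℂ] Z}
    {c' : X →L[ℂ] Z} {d' : Y →L[ℂ] Z} {t₀ : ℝ}
    (hc : HasDerivAt c c' t₀) (hd : HasDerivAt d d' t₀) :
    HasDerivAt (fun t => (c t).coprod (d t)) (c'.coprod d') t₀ :=
  (coprodEquivL (S := ℝ) : ((X →L[ℂ] Z) × (Y →L[ℂ] Z)) ≃L[ℝ] (X × Y →L[ℂ] Z))
    |>.toContinuousLinearMap.hasFDerivAt.comp_hasDerivAt t₀ (hc.prodMk hd)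

theorem HasDerivAt.clm_prod {c : ℝ → X →L[ℂ] Y} {d : ℝ → X →L[ℂ] Z}
    {c' : X →L[ℂ] Y} {d' : X →L[ℂ] Z} {t₀ : ℝ}
    (hc : HasDerivAt c c' t₀) (hd : HasDerivAt d d' t₀) :
    HasDerivAt (fun t => (c t).prod (d t)) (c'.prod d') t₀ :=
  (prodL ℝ : ((X →L[ℂ] Y) × (X →L[ℂ] Z)) ≃L[ℝ] (X →L[ℂ] Y × Z))
    |>.toContinuousLinearMap.hasFDerivAt.comp_hasDerivAt t₀ (hc.prodMk hd)

theorem HasDerivAt.comp_deriv_comp_eq_neg {A : ℝ → X →L[ℂ] Y} {ℓ : ℝ → Y →L[ℂ] Z}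
    {A' : X →L[ℂ] Y} {ℓ' : Y →L[ℂ] Z} {π : X →L[ℂ] Z} {t₀ : ℝ}
    (hA : HasDerivAt A A' t₀) (hℓ : HasDerivAt ℓ ℓ' t₀)
    (hℓA : ∀ᶠ t in 𝓝 t₀, (ℓ t).comp (A t) = π) (r : W →L[ℂ] X) :
    (ℓ t₀).comp (A'.comp r) = -ℓ'.comp ((A t₀).comp r) := by
  have hderiv : ℓ'.comp (A t₀) + (ℓ t₀).comp A' = 0 :=
    (hℓ.complexCLM_comp hA).unique ((hasDerivAt_const t₀ π).congr_of_eventuallyEq hℓA)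
  rw [eq_neg_iff_add_eq_zero, ← comp_assoc, ← comp_assoc, ← add_comp, add_comm, hderiv,
    zero_comp]

end

section

variable {H₁ H₂ Hm Hp : Type*}
  [NormedAddCommGroup H₁] [NormedSpace ℂ H₁] [NormedAddCommGroup H₂] [NormedSpace ℂ H₂]
  [NormedAddCommGroup Hm] [NormedSpace ℂ Hm] [NormedAddCommGroup Hp] [NormedSpace ℂ Hp]

def grushinOperator (P : H₁ →L[ℂ] H₂) (Rm : Hm →L[ℂ] H₂) (Rp : H₁ →L[ℂ] Hp) :
    H₁ × Hm →L[ℂ] H₂ × Hp :=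
  (P.coprod Rm).prod (Rp.coprod 0)

theorem HasDerivAt.grushinOperator {P : ℝ → H₁ →L[ℂ] H₂} {Rm : ℝ → Hm →L[ℂ] H₂}
    {Rp : ℝ → H₁ →L[ℂ] Hp} {P' : H₁ →L[ℂ] H₂} {Rm' : Hm →L[ℂ] H₂} {Rp' : H₁ →L[ℂ] Hp} {t₀ : ℝ}
    (hP : HasDerivAt P P' t₀) (hRm : HasDerivAt Rm Rm' t₀) (hRp : HasDerivAt Rp Rp' t₀) :
    HasDerivAt (fun t => grushinOperator (P t) (Rm t) (Rp t)) (grushinOperator P' Rm' Rp') t₀ :=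
  (hP.clm_coprod hRm).clm_prod (hRp.clm_coprod (hasDerivAt_const t₀ 0))

end

theorem stmt_19_general
    {H₁ H₂ Hm Hp : Type*}
    [NormedAddCommGroup H₁] [NormedSpace ℂ H₁]
    [NormedAddCommGroup H₂] [NormedSpace ℂ H₂]
    [NormedAddCommGroup Hm] [NormedSpace ℂ Hm]
    [NormedAddCommGroup Hp] [NormedSpace ℂ Hp]
    (a b t₀ : ℝ) (ht₀ : t₀ ∈ Set.Ioo a b)
    (P : ℝ → H₁ →L[ℂ] H₂) (Rm : ℝ → Hm →L[ℂ] H₂) (Rp : ℝ → H₁ →L[ℂ] Hp)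
    (E : ℝ → H₂ →L[ℂ] H₁) (Ep : ℝ → Hp →L[ℂ] H₁)
    (Em : ℝ → H₂ →L[ℂ] Hm) (Emp : ℝ → Hp →L[ℂ] Hm)
    (P' : H₁ →L[ℂ] H₂) (Rm' : Hm →L[ℂ] H₂) (Rp' : H₁ →L[ℂ] Hp)
    (Em' : H₂ →L[ℂ] Hm) (Emp' : Hp →L[ℂ] Hm)
    (hP : HasDerivAt P P' t₀) (hRm : HasDerivAt Rm Rm' t₀)
    (hRp : HasDerivAt Rp Rp' t₀)
    (hEm : HasDerivAt Em Em' t₀) (hEmp : HasDerivAt Emp Emp' t₀)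
    -- for each `t` in the interval, the Grushin problem is well posed with the
    -- inverse blocks `E t, E₊ t, E₋ t, E₋₊ t`
    (hwell : ∀ t ∈ Set.Ioo a b,
      (∀ (v : H₂) (vp : Hp),
        P t (E t v + Ep t vp) + Rm t (Em t v + Emp t vp) = v ∧
        Rp t (E t v + Ep t vp) = vp) ∧
      (∀ (u : H₁) (um : Hm),
        E t (P t u + Rm t um) + Ep t (Rp t u) = u ∧
        Em t (P t u + Rm t um) + Emp t (Rp t u) = um)) :
    (Em t₀).comp (P'.comp (Ep t₀)) =
      -Emp' - (Em t₀).comp (Rm'.comp (Emp t₀)) -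
        (Emp t₀).comp (Rp'.comp (Ep t₀)) := by
  have hrow : ∀ᶠ t in 𝓝 t₀,
      ((Em t).coprod (Emp t)).comp (grushinOperator (P t) (Rm t) (Rp t)) = snd ℂ H₁ Hm := by
    filter_upwards [Ioo_mem_nhds ht₀.1 ht₀.2] with t ht
    refine ContinuousLinearMap.ext fun x => ?_
    simpa [grushinOperator] using ((hwell t ht).2 x.1 x.2).2
  have hcol : (grushinOperator (P t₀) (Rm t₀) (Rp t₀)).comp ((Ep t₀).prod (Emp t₀)) =
      inr ℂ H₂ Hp := by
    ext vp
    · simpa [grushinOperator] using ((hwell t₀ ht₀).1 0 vp).1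
    · simpa [grushinOperator] using ((hwell t₀ ht₀).1 0 vp).2
  have hdiff := (hP.grushinOperator hRm hRp).comp_deriv_comp_eq_neg (hEm.clm_coprod hEmp) hrow
    ((Ep t₀).prod (Emp t₀))
  rw [hcol] at hdiff
  ext vp
  have hvp := congr($hdiff vp)
  simp only [grushinOperator, comp_apply, prod_apply, coprod_apply, neg_apply, inr_apply,
    map_add, zero_apply, map_zero, add_zero, zero_add] at hvp
  simp only [sub_apply, neg_apply, comp_apply, ← hvp]
  abel

/-- Differentiating a family of well-posed Grushin problems at `t₀` yields
`E₋ P′ E₊ = −E₋₊′ − E₋ R₋′ E₋₊ − E₋₊ R₊′ E₊` (all evaluated at `t₀`). -/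
theorem stmt_19
    {H₁ H₂ Hm Hp : Type*}
    [NormedAddCommGroup H₁] [NormedSpace ℂ H₁] [CompleteSpace H₁]
    [NormedAddCommGroup H₂] [NormedSpace ℂ H₂] [CompleteSpace H₂]
    [NormedAddCommGroup Hm] [NormedSpace ℂ Hm] [CompleteSpace Hm]
    [NormedAddCommGroup Hp] [NormedSpace ℂ Hp] [CompleteSpace Hp]
    (a b t₀ : ℝ) (ht₀ : t₀ ∈ Set.Ioo a b)
    (P : ℝ → H₁ →L[ℂ] H₂) (Rm : ℝ → Hm →L[ℂ] H₂) (Rp : ℝ → H₁ →L[ℂ] Hp)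
    (E : ℝ → H₂ →L[ℂ] H₁) (Ep : ℝ → Hp →L[ℂ] H₁)
    (Em : ℝ → H₂ →L[ℂ] Hm) (Emp : ℝ → Hp →L[ℂ] Hm)
    (P' : H₁ →L[ℂ] H₂) (Rm' : Hm →L[ℂ] H₂) (Rp' : H₁ →L[ℂ] Hp)
    (E' : H₂ →L[ℂ] H₁) (Ep' : Hp →L[ℂ] H₁) (Em' : H₂ →L[ℂ] Hm) (Emp' : Hp →L[ℂ] Hm)
    (hP : HasDerivAt P P' t₀) (hRm : HasDerivAt Rm Rm' t₀)
    (hRp : HasDerivAt Rp Rp' t₀)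
    (hE : HasDerivAt E E' t₀) (hEp : HasDerivAt Ep Ep' t₀)
    (hEm : HasDerivAt Em Em' t₀) (hEmp : HasDerivAt Emp Emp' t₀)
    -- for each `t` in the interval, the Grushin problem is well posed with the
    -- inverse blocks `E t, E₊ t, E₋ t, E₋₊ t`
    (hwell : ∀ t ∈ Set.Ioo a b,
      (∀ (v : H₂) (vp : Hp),
        P t (E t v + Ep t vp) + Rm t (Em t v + Emp t vp) = v ∧
        Rp t (E t v + Ep t vp) = vp) ∧
      (∀ (u : H₁) (um : Hm),
        E t (P t u + Rm t um) + Ep t (Rp t u) = u ∧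
        Em t (P t u + Rm t um) + Emp t (Rp t u) = um)) :
    (Em t₀).comp (P'.comp (Ep t₀)) =
      -Emp' - (Em t₀).comp (Rm'.comp (Emp t₀)) -
        (Emp t₀).comp (Rp'.comp (Ep t₀)) :=
  stmt_19_general a b t₀ ht₀ P Rm Rp E Ep Em Emp P' Rm' Rp' Em' Emp' hP hRm hRp hEm hEmp hwell
end
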